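/- arXiv:2209.07745 — 5 statements merged into one kernel-verified Lean document; each statement's English description precedes it below -/
import Mathlib

section
/- The language N of finite words over {0,1} that have a non-Dyck prefix (a prefix with strictly more 1's than 0's) is accepted by a history-deterministic Parikh automaton. -/
open scoped BigOperators

/-- A set `C ⊆ ℕ^d` is linear if `C = {v₀ + Σᵢ cᵢ vᵢ | cᵢ ∈ ℕ}` for some vectors. -/
def IsLinear {d : ℕ} (C : Set (Fin d → ℕ)) : Prop :=
  ∃ (k : ℕ) (v₀ : Fin d → ℕ) (v : Fin k → Fin d → ℕ),
    C = {x | ∃ c : Fin k → ℕ, x = v₀ + ∑ i, c i • v i}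

/-- A set is semilinear if it is a finite union of linear sets. -/
def IsSemilinear {d : ℕ} (C : Set (Fin d → ℕ)) : Prop :=
  ∃ (m : ℕ) (Cs : Fin m → Set (Fin d → ℕ)),
    (∀ i, IsLinear (Cs i)) ∧ C = ⋃ i, Cs i

/-- A Parikh automaton over alphabet `A` of dimension `d`: an NFA whose transitions are
labeled by a letter and a vector in `ℕ^d`, together with a semilinear acceptance set `C`. -/
structure PA (A : Type) (d : ℕ) where
  n : ℕ
  init : Fin n
  final : Set (Fin n)
  trans : Set (Fin n × (A × (Fin d → ℕ)) × Fin n)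
  transFin : trans.Finite
  C : Set (Fin d → ℕ)
  hC : IsSemilinear C

namespace PA

variable {A : Type} {d : ℕ}

/-- The type of transitions of a Parikh automaton. -/
abbrev Tr (P : PA A d) := Fin P.n × (A × (Fin d → ℕ)) × Fin P.n

/-- The word processed by a run (its Σ-projection). -/
def word (P : PA A d) (ρ : List P.Tr) : List A := ρ.map (fun t => t.2.1.1)

/-- The extended Parikh image of a run: the sum of the vector labels. -/
def image (P : PA A d) (ρ : List P.Tr) : Fin d → ℕ := (ρ.map (fun t => t.2.1.2)).sum

/-- The last state of a run (the initial state for the empty run). -/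
def lastState (P : PA A d) (ρ : List P.Tr) : Fin P.n :=
  (ρ.getLast?).elim P.init (fun t => t.2.2)

/-- A run: a sequence of transitions of `P`, consecutively matching, starting in the
initial state. -/
def IsRun (P : PA A d) (ρ : List P.Tr) : Prop :=
  (∀ t ∈ ρ, t ∈ P.trans) ∧
  ρ.Chain' (fun t t' => t.2.2 = t'.1) ∧
  (∀ t, ρ.head? = some t → t.1 = P.init)

/-- An accepting run: a run ending in an accepting state whose extended Parikh image
lies in `C`. -/
def Accepting (P : PA A d) (ρ : List P.Tr) : Prop :=
  P.IsRun ρ ∧ P.lastState ρ ∈ P.final ∧ P.image ρ ∈ P.C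

/-- The language of a Parikh automaton. -/
def Lang (P : PA A d) : Set (List A) :=
  {w | ∃ ρ, P.Accepting ρ ∧ P.word ρ = w}

/-- Determinism: for every state and letter there is at most one outgoing transition. -/
def Deterministic (P : PA A d) : Prop :=
  ∀ (q : Fin P.n) (a : A),
    Set.Subsingleton {p : Fin P.n × (Fin d → ℕ) | (q, (a, p.2), p.1) ∈ P.trans}

/-- Iterating a resolver `r` (fed the history and the next letter) along a word;
`pre` is the prefix read so far. -/
def iterResAux (P : PA A d) (r : List A → A → P.Tr) : List A → List A → List P.Tr
  | _, [] => []
  | pre, a :: rest => r pre a :: P.iterResAux r (pre ++ [a]) rest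

/-- The run built by iterating the resolver `r` letter by letter along `w`. -/
def iterRes (P : PA A d) (r : List A → A → P.Tr) (w : List A) : List P.Tr :=
  P.iterResAux r [] w

/-- `r` is a resolver: for every accepted word `w`, iterating `r` along `w` yields an
accepting run processing `w`. -/
def IsResolver (P : PA A d) (r : List A → A → P.Tr) : Prop :=
  ∀ w ∈ P.Lang, P.Accepting (P.iterRes r w) ∧ P.word (P.iterRes r w) = w

/-- A Parikh automaton is history-deterministic if it has a resolver. -/
def HistoryDeterministic (P : PA A d) : Prop := ∃ r, P.IsResolver r

end PA

/-- The language of words over `{0,1}` (encoded as `{false, true}`) having a prefix with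
strictly more 1's than 0's. -/
def NonDyckPrefixLang : Set (List Bool) :=
  {w | ∃ p, p <+: w ∧ p.count false < p.count true}



namespace NDPaux

open scoped Classical

/-- The counting vector attached to a letter. -/
def vec (b : Bool) : Fin 2 → ℕ := if b then ![0,1] else ![1,0]

/-- Count vector of a word. -/
def cnt (w : List Bool) : Fin 2 → ℕ := ![w.count false, w.count true]

/-- `w` has a non-Dyck prefix. -/
def ND (w : List Bool) : Prop := ∃ p, p <+: w ∧ p.count false < p.count true

lemma cnt_nil : cnt [] = 0 := by
  funext i; fin_cases i <;> simp [cnt]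

lemma cnt_cons (a : Bool) (l : List Bool) : cnt (a :: l) = vec a + cnt l := by
  funext i
  fin_cases i <;> cases a <;> simp [cnt, vec, List.count_cons] <;> omega

lemma cnt_append_singleton (l : List Bool) (a : Bool) :
    cnt (l ++ [a]) = cnt l + vec a := by
  funext i
  fin_cases i <;> cases a <;>
    simp [cnt, vec, List.count_append, List.count_cons] <;> omega

lemma not_ND_nil : ¬ ND [] := by
  rintro ⟨p, hp, h⟩
  rw [List.prefix_nil] at hp; subst hp; simp at h

lemma ND_mono {pre : List Bool} (l : List Bool) (h : ND pre) : ND (pre ++ l) := by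
  obtain ⟨p, hp, h2⟩ := h
  exact ⟨p, hp.trans (List.prefix_append _ _), h2⟩

lemma ND_concat {pre : List Bool} {a : Bool} (h : ND (pre ++ [a])) (h2 : ¬ ND pre) :
    (pre ++ [a]).count false < (pre ++ [a]).count true := by
  obtain ⟨p, hp, h3⟩ := h
  rcases List.prefix_concat_iff.mp hp with rfl | hp'
  · exact h3
  · exact absurd ⟨p, hp', h3⟩ h2

/-- The transition type. -/
abbrev TT := Fin 2 × (Bool × (Fin 2 → ℕ)) × Fin 2

/-- Transition set: count in state 0 (optionally jumping to 1), idle in state 1. -/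
def T : Set TT :=
  {(0,(false, vec false),0), (0,(true, vec true),0),
   (0,(false, vec false),1), (0,(true, vec true),1),
   (1,(false, 0),1), (1,(true, 0),1)}

lemma T_finite : T.Finite := by
  unfold T
  exact (((((Set.finite_singleton _).insert _).insert _).insert _).insert _).insert _

lemma mem_T_stay (a : Bool) : ((0 : Fin 2),(a, vec a),(0 : Fin 2)) ∈ T := by
  cases a <;> simp [T]

lemma mem_T_jump (a : Bool) : ((0 : Fin 2),(a, vec a),(1 : Fin 2)) ∈ T := by
  cases a <;> simp [T]

lemma mem_T_idle (a : Bool) : ((1 : Fin 2),(a, (0 : Fin 2 → ℕ)),(1 : Fin 2)) ∈ T := by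
  cases a <;> simp [T]

lemma T_src1 {t : TT} (ht : t ∈ T) (h : t.1 = 1) :
    t.2.1.2 = 0 ∧ t.2.2 = 1 := by
  simp only [T, Set.mem_insert_iff, Set.mem_singleton_iff] at ht
  rcases ht with rfl|rfl|rfl|rfl|rfl|rfl <;> simp_all

lemma T_src0 {t : TT} (ht : t ∈ T) (h : t.1 = 0) :
    t.2.1.2 = vec t.2.1.1 := by
  simp only [T, Set.mem_insert_iff, Set.mem_singleton_iff] at ht
  rcases ht with rfl|rfl|rfl|rfl|rfl|rfl <;> simp_all

/-- The semilinear acceptance set. -/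
def Cset : Set (Fin 2 → ℕ) := {v | v 0 < v 1}

lemma Cset_semilinear : IsSemilinear Cset := by
  refine ⟨1, fun _ => Cset, fun _ => ⟨2, ![0,1], ![![1,1],![0,1]], ?_⟩,
    (Set.iUnion_const Cset).symm⟩
  ext x
  simp only [Cset, Set.mem_setOf_eq, Fin.sum_univ_two]
  constructor
  · intro h
    refine ⟨![x 0, x 1 - x 0 - 1], ?_⟩
    funext i
    fin_cases i <;> simp <;> omega
  · rintro ⟨c, rfl⟩
    simp
    omega

/-- The Parikh automaton. -/
@[reducible] def P : PA Bool 2 := ⟨2, 0, {1}, T, T_finite, Cset, Cset_semilinear⟩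

/-- The resolver. -/
noncomputable def r : List Bool → Bool → TT :=
  fun pre a =>
    if ND pre then (1,(a,0),1)
    else if ND (pre ++ [a]) then (0,(a, vec a),1)
    else (0,(a, vec a),0)

lemma r_mem (pre : List Bool) (a : Bool) : r pre a ∈ T := by
  unfold r
  split_ifs <;> [exact mem_T_idle a; exact mem_T_jump a; exact mem_T_stay a]

lemma r_letter (pre : List Bool) (a : Bool) : (r pre a).2.1.1 = a := by
  unfold r; split_ifs <;> rfl

lemma r_fst (pre : List Bool) (a : Bool) :
    (r pre a).1 = if ND pre then 1 else 0 := by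
  unfold r; split_ifs <;> rfl

lemma r_snd (pre : List Bool) (a : Bool) :
    (r pre a).2.2 = if ND (pre ++ [a]) then 1 else 0 := by
  unfold r
  by_cases h : ND pre
  · simp [h, if_pos (ND_mono [a] h)]
  · by_cases h2 : ND (pre ++ [a]) <;> simp [h, h2]

lemma r_vec_of_ND {pre : List Bool} (h : ND pre) (a : Bool) : (r pre a).2.1.2 = 0 := by
  unfold r; rw [if_pos h]

lemma r_vec_of_not_ND {pre : List Bool} (h : ¬ ND pre) (a : Bool) :
    (r pre a).2.1.2 = vec a := by
  unfold r; rw [if_neg h]; split_ifs <;> rfl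

lemma word_iterResAux (w pre : List Bool) : P.word (P.iterResAux r pre w) = w := by
  induction w generalizing pre with
  | nil => rfl
  | cons a rest ih =>
    simp only [PA.iterResAux, PA.word, List.map_cons, List.cons.injEq] at ih ⊢
    exact ⟨r_letter pre a, ih _⟩

lemma mem_iterResAux (w pre : List Bool) :
    ∀ t ∈ P.iterResAux r pre w, t ∈ P.trans := by
  induction w generalizing pre with
  | nil => simp [PA.iterResAux]
  | cons a rest ih =>
    simp only [PA.iterResAux, List.mem_cons]
    rintro t (rfl | ht)
    · exact r_mem pre a
    · exact ih _ t ht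

lemma head?_iterResAux (w pre : List Bool) (t : TT)
    (h : (P.iterResAux r pre w).head? = some t) :
    t.1 = if ND pre then 1 else 0 := by
  cases w with
  | nil => simp [PA.iterResAux] at h
  | cons a rest =>
    simp only [PA.iterResAux, List.head?_cons, Option.some_inj] at h
    rw [← h]; exact r_fst pre a

lemma chain'_iterResAux (w pre : List Bool) :
    (P.iterResAux r pre w).Chain' (fun t t' => t.2.2 = t'.1) := by
  induction w generalizing pre with
  | nil => exact List.isChain_nil
  | cons a rest ih =>
    rw [show P.iterResAux r pre (a :: rest) = r pre a :: P.iterResAux r (pre ++ [a]) rest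
        from rfl,
      List.Chain', List.isChain_cons]
    refine ⟨fun y hy => ?_, ih _⟩
    rw [head?_iterResAux rest (pre ++ [a]) y hy, r_snd]

lemma lastState_cons (t : TT) (l : List TT) (hl : l ≠ []) :
    P.lastState (t :: l) = P.lastState l := by
  cases l with
  | nil => exact absurd rfl hl
  | cons b l' =>
    unfold PA.lastState
    rw [List.getLast?_cons_cons]

lemma iterResAux_ne_nil (a : Bool) (rest pre : List Bool) :
    P.iterResAux r pre (a :: rest) ≠ [] := by
  simp [PA.iterResAux]

lemma lastState_iterResAux (w pre : List Bool) (hw : w ≠ []) :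
    P.lastState (P.iterResAux r pre w) = if ND (pre ++ w) then 1 else 0 := by
  induction w generalizing pre with
  | nil => exact absurd rfl hw
  | cons a rest ih =>
    cases rest with
    | nil =>
      show P.lastState [r pre a] = _
      unfold PA.lastState
      rw [List.getLast?_singleton, Option.elim_some]
      exact r_snd pre a
    | cons b rest' =>
      rw [show P.iterResAux r pre (a :: b :: rest') =
            r pre a :: P.iterResAux r (pre ++ [a]) (b :: rest') from rfl,
        lastState_cons _ _ (iterResAux_ne_nil b rest' (pre ++ [a])),
        ih (pre ++ [a]) (by simp)]
      rw [List.append_assoc]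
      rfl

lemma image_cons (t : TT) (l : List TT) :
    P.image (t :: l) = t.2.1.2 + P.image l := by
  simp [PA.image]

lemma image_iterResAux_of_ND (w : List Bool) {pre : List Bool} (h : ND pre) :
    P.image (P.iterResAux r pre w) = 0 := by
  induction w generalizing pre with
  | nil => rfl
  | cons a rest ih =>
    rw [show P.iterResAux r pre (a :: rest) =
          r pre a :: P.iterResAux r (pre ++ [a]) rest from rfl,
      image_cons, r_vec_of_ND h, ih (ND_mono [a] h), add_zero]

lemma image_iterResAux_of_not_ND (w : List Bool) {pre : List Bool} (h : ¬ ND pre)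
    (h2 : ND (pre ++ w)) :
    ∃ q, q <+: (pre ++ w) ∧ q.count false < q.count true ∧
      cnt pre + P.image (P.iterResAux r pre w) = cnt q := by
  induction w generalizing pre with
  | nil => rw [List.append_nil] at h2; exact absurd h2 h
  | cons a rest ih =>
    have himg : P.image (P.iterResAux r pre (a :: rest)) =
        (r pre a).2.1.2 + P.image (P.iterResAux r (pre ++ [a]) rest) := image_cons _ _
    by_cases h3 : ND (pre ++ [a])
    · refine ⟨pre ++ [a], ⟨rest, by simp⟩, ND_concat h3 h, ?_⟩
      rw [himg, r_vec_of_not_ND h, image_iterResAux_of_ND rest h3,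
        cnt_append_singleton, add_zero]
    · have h4 : ND ((pre ++ [a]) ++ rest) := by
        rwa [List.append_assoc]
      obtain ⟨q, hq1, hq2, hq3⟩ := ih h3 h4
      rw [List.append_assoc] at hq1
      refine ⟨q, hq1, hq2, ?_⟩
      rw [himg, r_vec_of_not_ND h, ← hq3, cnt_append_singleton]
      abel

lemma accepting_of_ND {w : List Bool} (h : ND w) :
    P.Accepting (P.iterRes r w) ∧ P.word (P.iterRes r w) = w := by
  have hw : w ≠ [] := by rintro rfl; exact not_ND_nil h
  refine ⟨⟨⟨mem_iterResAux w [], chain'_iterResAux w [], fun t ht => ?_⟩, ?_, ?_⟩,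
    word_iterResAux w []⟩
  · rw [head?_iterResAux w [] t ht, if_neg not_ND_nil]
  · show P.lastState (P.iterResAux r [] w) ∈ P.final
    rw [lastState_iterResAux w [] hw, List.nil_append, if_pos h]
    exact rfl
  · obtain ⟨q, _, hq2, hq3⟩ := image_iterResAux_of_not_ND w not_ND_nil
      (by simpa using h)
    show P.image (P.iterResAux r [] w) ∈ Cset
    rw [cnt_nil, zero_add] at hq3
    rw [hq3]
    simpa [Cset, cnt] using hq2

lemma image_run_src1 (ρ : List TT) (hmem : ∀ t ∈ ρ, t ∈ T)
    (hch : ρ.Chain' (fun t t' => t.2.2 = t'.1))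
    (hhd : ∀ t, ρ.head? = some t → t.1 = 1) :
    P.image ρ = 0 := by
  induction ρ with
  | nil => rfl
  | cons t rest ih =>
    have ht1 : t.1 = 1 := hhd t rfl
    obtain ⟨hv, htgt⟩ := T_src1 (hmem t List.mem_cons_self) ht1
    rw [List.Chain', List.isChain_cons] at hch
    have hr : P.image rest = 0 := by
      refine ih (fun s hs => hmem s (List.mem_cons_of_mem _ hs)) hch.2 fun s hs => ?_
      rw [← hch.1 s hs, htgt]
    rw [image_cons, hv, hr, add_zero]

lemma image_run_src0 (ρ : List TT) (hmem : ∀ t ∈ ρ, t ∈ T)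
    (hch : ρ.Chain' (fun t t' => t.2.2 = t'.1))
    (hhd : ∀ t, ρ.head? = some t → t.1 = 0) :
    ∃ q, q <+: P.word ρ ∧ P.image ρ = cnt q := by
  induction ρ with
  | nil => exact ⟨[], List.nil_prefix, cnt_nil.symm⟩
  | cons t rest ih =>
    have ht0 : t.1 = 0 := hhd t rfl
    have hv := T_src0 (hmem t List.mem_cons_self) ht0
    rw [List.Chain', List.isChain_cons] at hch
    have hmem' : ∀ s ∈ rest, s ∈ T := fun s hs => hmem s (List.mem_cons_of_mem _ hs)
    have hword : P.word (t :: rest) = t.2.1.1 :: P.word rest := by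
      simp [PA.word]
    have htgt : t.2.2 = 0 ∨ t.2.2 = 1 := by omega
    rcases htgt with htgt | htgt
    · obtain ⟨q, hq1, hq2⟩ := ih hmem' hch.2 fun s hs => by rw [← hch.1 s hs, htgt]
      refine ⟨t.2.1.1 :: q, ?_, ?_⟩
      · rw [hword, List.cons_prefix_cons]; exact ⟨rfl, hq1⟩
      · rw [image_cons, hq2, cnt_cons, hv]
    · have hr : P.image rest = 0 :=
        image_run_src1 rest hmem' hch.2 fun s hs => by rw [← hch.1 s hs, htgt]
      refine ⟨[t.2.1.1], ?_, ?_⟩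
      · rw [hword, List.cons_prefix_cons]; exact ⟨rfl, List.nil_prefix⟩
      · rw [image_cons, hr, hv, add_zero, show [t.2.1.1] = t.2.1.1 :: [] from rfl,
          cnt_cons, cnt_nil, add_zero]

lemma ND_of_mem_Lang {w : List Bool} (h : w ∈ P.Lang) : ND w := by
  obtain ⟨ρ, ⟨⟨hmem, hch, hhd⟩, _, himg⟩, hword⟩ := h
  obtain ⟨q, hq1, hq2⟩ := image_run_src0 ρ hmem hch (fun t ht => hhd t ht)
  rw [hq2] at himg
  refine ⟨q, hword ▸ hq1, ?_⟩
  simpa [Cset, cnt] using himg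

lemma Lang_eq : P.Lang = NonDyckPrefixLang := by
  ext w
  constructor
  · exact fun h => ND_of_mem_Lang h
  · intro h
    obtain ⟨hacc, hword⟩ := accepting_of_ND h
    exact ⟨_, hacc, hword⟩

end NDPaux

/-- The language of words with a non-Dyck prefix is accepted by a history-deterministic
Parikh automaton. -/
theorem nonDyckPrefix_hdpa :
    ∃ (d : ℕ) (P : PA Bool d), P.HistoryDeterministic ∧ P.Lang = NonDyckPrefixLang := by
  refine ⟨2, NDPaux.P, ⟨NDPaux.r, fun w hw => ?_⟩, NDPaux.Lang_eq⟩
  exact NDPaux.accepting_of_ND (NDPaux.ND_of_mem_Lang hw)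
end

section
/- The language E = {a,b}* · {aⁿbⁿ | n > 0} over the alphabet {a,b} is not accepted by any history-deterministic Parikh automaton. -/
open scoped BigOperators

/-- The language `E = {a,b}* · {aⁿbⁿ | n > 0}`, with `a` encoded as `false` and `b` as
`true`. -/
def ELang : Set (List Bool) :=
  {w | ∃ (u : List Bool) (n : ℕ), 0 < n ∧
    w = u ++ List.replicate n false ++ List.replicate n true}

/-!
A resolver has finitely many states, so along the prefixes `(b aᵖ)ʲ b aⁱ` of `(b aᵖ)^ω`
(`p` = number of states, `i ≤ p`) it repeats itself: there are `j₁ < j₂` and `s < t ≤ p` such that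
it is in the same state after `(b aᵖ)^j₁ b aᵗ`, `(b aᵖ)^j₂ b aˢ` and `(b aᵖ)^j₂ b aᵗ`. Its run on
`(b aᵖ)^j₂ b a^(t+1) b^(t+1) ∈ E` therefore contains two consecutive loops, reading
`x = a^(p-t) (b aᵖ)^(j₂-j₁-1) b aˢ` and `y = a^(t-s)`. Exchanging them keeps the run accepting
(the Parikh image is a sum), but the new word ends in `b a^(s+1) b^(t+1)` with `s < t`, so it is
not in `E`.
-/

namespace PA

variable {A : Type} {d : ℕ}

inductive IsPath (P : PA A d) : Fin P.n → List P.Tr → Fin P.n → Prop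
  | nil (q : Fin P.n) : IsPath P q [] q
  | cons {t : P.Tr} {ρ : List P.Tr} {q : Fin P.n} :
      t ∈ P.trans → IsPath P t.2.2 ρ q → IsPath P t.1 (t :: ρ) q

def resState (P : PA A d) (r : List A → A → P.Tr) (w : List A) : Fin P.n :=
  P.lastState (P.iterRes r w)

variable {P : PA A d}

theorem isPath_append_iff {q q'' : Fin P.n} {ρ₁ ρ₂ : List P.Tr} :
    P.IsPath q (ρ₁ ++ ρ₂) q'' ↔ ∃ q', P.IsPath q ρ₁ q' ∧ P.IsPath q' ρ₂ q'' := by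
  induction ρ₁ generalizing q with
  | nil => exact ⟨fun h => ⟨q, .nil q, h⟩, fun ⟨_, .nil _, h⟩ => h⟩
  | cons t ρ₁ ih =>
    constructor
    · rintro (_ | ⟨ht, h⟩)
      obtain ⟨q', h₁, h₂⟩ := ih.1 h
      exact ⟨q', .cons ht h₁, h₂⟩
    · rintro ⟨q', _ | ⟨ht, h₁⟩, h₂⟩
      exact .cons ht (ih.2 ⟨q', h₁, h₂⟩)

theorem isPath_iff {q q' : Fin P.n} {ρ : List P.Tr} :
    P.IsPath q ρ q' ↔ (∀ t ∈ ρ, t ∈ P.trans) ∧ ρ.IsChain (fun t t' => t.2.2 = t'.1) ∧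
      (∀ t, ρ.head? = some t → t.1 = q) ∧ ρ.getLast?.elim q (fun t => t.2.2) = q' := by
  induction ρ generalizing q with
  | nil =>
    refine ⟨fun | .nil _ => by simp [List.IsChain.nil], ?_⟩
    rintro ⟨-, -, -, rfl⟩
    exact .nil q
  | cons t ρ ih =>
    have hlast : (t :: ρ).getLast?.elim q (fun t => t.2.2) =
        ρ.getLast?.elim t.2.2 (fun t => t.2.2) := by
      cases ρ using List.reverseRecOn <;> simp [List.getLast?_cons]
    simp only [List.isChain_cons, List.mem_cons, forall_eq_or_imp,
      List.head?_cons, Option.some.injEq, forall_eq', hlast]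
    constructor
    · rintro (_ | ⟨ht, h⟩)
      obtain ⟨hmem, hchain, hhead, hend⟩ := ih.1 h
      exact ⟨⟨ht, hmem⟩, ⟨fun t' ht' => (hhead t' ht').symm, hchain⟩, rfl, hend⟩
    · rintro ⟨⟨ht, hmem⟩, ⟨hrel, hchain⟩, rfl, hend⟩
      exact .cons ht (ih.2 ⟨hmem, hchain, fun t' ht' => (hrel t' ht').symm, hend⟩)

theorem isRun_and_lastState_eq_iff {q : Fin P.n} {ρ : List P.Tr} :
    P.IsRun ρ ∧ P.lastState ρ = q ↔ P.IsPath P.init ρ q := by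
  rw [isPath_iff, IsRun, lastState, List.Chain']
  tauto

theorem isRun_append_iff {q : Fin P.n} {ρ₁ ρ₂ : List P.Tr} :
    P.IsRun (ρ₁ ++ ρ₂) ∧ P.lastState (ρ₁ ++ ρ₂) = q ↔
      P.IsRun ρ₁ ∧ P.IsPath (P.lastState ρ₁) ρ₂ q := by
  rw [isRun_and_lastState_eq_iff, isPath_append_iff]
  constructor
  · rintro ⟨q', h₁, h₂⟩
    obtain ⟨hrun, rfl⟩ := isRun_and_lastState_eq_iff.2 h₁
    exact ⟨hrun, h₂⟩
  · rintro ⟨hrun, h⟩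
    exact ⟨_, isRun_and_lastState_eq_iff.1 ⟨hrun, rfl⟩, h⟩

@[simp] theorem word_append (ρ₁ ρ₂ : List P.Tr) :
    P.word (ρ₁ ++ ρ₂) = P.word ρ₁ ++ P.word ρ₂ :=
  List.map_append

@[simp] theorem length_word (ρ : List P.Tr) : (P.word ρ).length = ρ.length :=
  List.length_map _

@[simp] theorem image_append (ρ₁ ρ₂ : List P.Tr) :
    P.image (ρ₁ ++ ρ₂) = P.image ρ₁ + P.image ρ₂ := by
  simp [image]

section Resolver

variable (r : List A → A → P.Tr)

@[simp] theorem length_iterResAux (pre w : List A) : (P.iterResAux r pre w).length = w.length := by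
  induction w generalizing pre with
  | nil => rfl
  | cons a w ih => simp [iterResAux, ih]

theorem iterResAux_append (pre w₁ w₂ : List A) :
    P.iterResAux r pre (w₁ ++ w₂) = P.iterResAux r pre w₁ ++ P.iterResAux r (pre ++ w₁) w₂ := by
  induction w₁ generalizing pre with
  | nil => simp [iterResAux]
  | cons a w₁ ih => simp [iterResAux, ih]

theorem iterRes_append (w₁ w₂ : List A) :
    P.iterRes r (w₁ ++ w₂) = P.iterRes r w₁ ++ P.iterResAux r w₁ w₂ :=
  iterResAux_append r [] w₁ w₂

theorem isPath_iterResAux_of_isRun_iterRes_append {w₁ w₂ : List A}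
    (hrun : P.IsRun (P.iterRes r (w₁ ++ w₂)))
    (hword : P.word (P.iterRes r (w₁ ++ w₂)) = w₁ ++ w₂) :
    (P.IsRun (P.iterRes r w₁) ∧ P.word (P.iterRes r w₁) = w₁) ∧
      P.IsPath (P.resState r w₁) (P.iterResAux r w₁ w₂) (P.resState r (w₁ ++ w₂)) ∧
      P.word (P.iterResAux r w₁ w₂) = w₂ := by
  rw [iterRes_append] at hrun hword
  obtain ⟨hrun₁, hpath⟩ := isRun_append_iff.1 ⟨hrun, rfl⟩
  obtain ⟨hw₁, hw₂⟩ := List.append_inj (word_append _ _ ▸ hword) (by simp [iterRes])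
  exact ⟨⟨hrun₁, hw₁⟩, by rwa [resState, resState, iterRes_append], hw₂⟩

end Resolver

theorem IsResolver.append_swap_mem_lang {r : List A → A → P.Tr} (hr : P.IsResolver r)
    {u x y z : List A} (hx : P.resState r (u ++ x) = P.resState r u)
    (hy : P.resState r (u ++ x ++ y) = P.resState r u)
    (h : u ++ x ++ y ++ z ∈ P.Lang) : u ++ y ++ x ++ z ∈ P.Lang := by
  obtain ⟨⟨hrun, hfin, himg⟩, hword⟩ := hr _ h
  obtain ⟨⟨hrun₃, hword₃⟩, hz, hwz⟩ := isPath_iterResAux_of_isRun_iterRes_append r hrun hword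
  obtain ⟨⟨hrun₂, hword₂⟩, hy', hwy⟩ :=
    isPath_iterResAux_of_isRun_iterRes_append r hrun₃ hword₃
  obtain ⟨⟨hrun₁, hwu⟩, hx', hwx⟩ := isPath_iterResAux_of_isRun_iterRes_append r hrun₂ hword₂
  rw [hy] at hy' hz
  rw [hx] at hx' hy'
  obtain ⟨hrun', hlast'⟩ := isRun_append_iff.2
    ⟨hrun₁, isPath_append_iff.2 ⟨_, hy', isPath_append_iff.2 ⟨_, hx', hz⟩⟩⟩
  refine ⟨_, ⟨hrun', hlast' ▸ hfin, ?_⟩, ?_⟩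
  · simp only [iterRes_append, image_append] at himg ⊢
    convert himg using 1
    abel
  · rw [word_append, word_append, word_append, hwu, hwy, hwx, hwz]
    simp only [List.append_assoc]

end PA

theorem List.le_of_replicate_append_eq_replicate_append_cons {α : Type*} {x y : α} (hxy : y ≠ x)
    {n k : ℕ} {l l' : List α} (h : replicate n x ++ l = replicate k x ++ y :: l') : n ≤ k := by
  induction n generalizing k with
  | zero => exact k.zero_le
  | succ n ih =>
    cases k with
    | zero => exact absurd (List.cons_eq_cons.1 h).1.symm hxy
    | succ k => exact Nat.succ_le_succ (ih (List.cons_eq_cons.1 h).2)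

theorem le_of_append_cons_replicate_mem_ELang {Z : List Bool} {k m : ℕ} (hk : 0 < k)
    (h : Z ++ true :: List.replicate k false ++ List.replicate m true ∈ ELang) : m ≤ k := by
  obtain ⟨u, n, hn, h⟩ := h
  obtain ⟨k, rfl⟩ := Nat.exists_eq_succ_of_ne_zero hk.ne'
  obtain ⟨n, rfl⟩ := Nat.exists_eq_succ_of_ne_zero hn.ne'
  replace h := congrArg List.reverse h
  simp only [List.reverse_append, List.reverse_cons, List.reverse_replicate,
    List.append_assoc, List.singleton_append] at h
  rw [List.replicate_succ (n := k), List.replicate_succ (n := n) (a := false), List.cons_append,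
    List.cons_append] at h
  obtain rfl : m = n + 1 := le_antisymm
    (List.le_of_replicate_append_eq_replicate_append_cons Bool.false_ne_true h)
    (List.le_of_replicate_append_eq_replicate_append_cons Bool.false_ne_true h.symm)
  have h' := (List.cons_eq_cons.1 (List.append_cancel_left h)).2
  exact Nat.succ_le_succ
    (List.le_of_replicate_append_eq_replicate_append_cons Bool.false_ne_true.symm h'.symm)

theorem Fintype.exists_lt_le_card_map_eq {α : Type*} [Fintype α] (f : ℕ → α) :
    ∃ s t, s < t ∧ t ≤ Fintype.card α ∧ f s = f t := by
  obtain ⟨s, hs, t, ht, hne, heq⟩ := Finset.exists_ne_map_eq_of_card_lt_of_maps_to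
    (s := Finset.range (Fintype.card α + 1)) (t := Finset.univ) (f := f) (by simp)
    (fun _ _ => by simp)
  rw [Finset.mem_range] at hs ht
  rcases hne.lt_or_gt with h | h
  · exact ⟨s, t, h, by omega, heq⟩
  · exact ⟨t, s, h, by omega, heq.symm⟩

theorem Fintype.exists_lt_lt_le_card_map_eq {α : Type*} [Fintype α] (g : ℕ → ℕ → α) :
    ∃ j₁ j₂ s t, j₁ < j₂ ∧ s < t ∧ t ≤ Fintype.card α ∧ g j₁ t = g j₂ s ∧ g j₂ s = g j₂ t := by
  choose S T hST hT hg using fun j => exists_lt_le_card_map_eq (g j)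
  obtain ⟨j₁, j₂, hj, heq⟩ := Set.Finite.exists_lt_map_eq_of_forall_mem
    (f := fun j => (S j, T j, g j (S j)))
    (t := Set.Iic (Fintype.card α) ×ˢ Set.Iic (Fintype.card α) ×ˢ Set.univ)
    (fun j => ⟨((hST j).trans_le (hT j)).le, hT j, trivial⟩)
    ((Set.finite_Iic _).prod ((Set.finite_Iic _).prod Set.finite_univ))
  simp only [Prod.mk.injEq] at heq
  obtain ⟨hS, hT', hgS⟩ := heq
  refine ⟨j₁, j₂, S j₂, T j₂, hj, hST j₂, hT j₂, ?_, hg j₂⟩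
  rw [← hS, ← hT', ← hg j₁, hgS, hS]

/-- The word `(b aᵖ)ʲ b aⁱ`. -/
def blockPrefix (p j i : ℕ) : List Bool :=
  (List.replicate j (true :: List.replicate p false)).flatten ++ true :: List.replicate i false

theorem blockPrefix_append_replicate (p j i δ : ℕ) :
    blockPrefix p j i ++ List.replicate δ false = blockPrefix p j (i + δ) := by
  simp [blockPrefix]

theorem blockPrefix_append_blockPrefix {p t : ℕ} (ht : t ≤ p) (j k s : ℕ) :
    blockPrefix p j t ++ (List.replicate (p - t) false ++ blockPrefix p k s) =
      blockPrefix p (j + k + 1) s := by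
  rw [blockPrefix, blockPrefix, blockPrefix, add_right_comm, List.replicate_add,
    List.replicate_succ', List.flatten_append, List.flatten_append]
  simp only [List.append_assoc, List.cons_append, List.flatten_cons, List.flatten_nil,
    List.append_nil]
  rw [← List.append_assoc (List.replicate t false), List.replicate_append_replicate,
    Nat.add_sub_cancel' ht]

theorem blockPrefix_append_mem_ELang (p j i : ℕ) :
    blockPrefix p j i ++ false :: List.replicate (i + 1) true ∈ ELang :=
  ⟨(List.replicate j (true :: List.replicate p false)).flatten ++ [true], i + 1, i.succ_pos,
    by simp [blockPrefix, List.replicate_succ']⟩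

theorem le_of_append_blockPrefix_append_mem_ELang {w : List Bool} {p k s m : ℕ}
    (h : w ++ blockPrefix p k s ++ false :: List.replicate m true ∈ ELang) : m ≤ s + 1 :=
  le_of_append_cons_replicate_mem_ELang s.succ_pos (Z := w ++ _) (by
    simpa [blockPrefix, List.replicate_succ'] using h)

/-- `E` is not accepted by any history-deterministic Parikh automaton. -/
theorem ELang_not_hdpa :
    ¬ ∃ (d : ℕ) (P : PA Bool d), P.HistoryDeterministic ∧ P.Lang = ELang := by
  rintro ⟨d, P, ⟨r, hr⟩, hL⟩
  obtain ⟨j₁, j₂, s, t, hj, hst, htn, h₁, h₂⟩ :=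
    Fintype.exists_lt_lt_le_card_map_eq fun j i => P.resState r (blockPrefix P.n j i)
  rw [Fintype.card_fin] at htn
  obtain ⟨k, rfl⟩ := Nat.exists_eq_add_of_lt hj
  have hx := blockPrefix_append_blockPrefix htn j₁ k s
  have hxy : blockPrefix P.n j₁ t ++ (List.replicate (P.n - t) false ++ blockPrefix P.n k s) ++
      List.replicate (t - s) false = blockPrefix P.n (j₁ + k + 1) t := by
    rw [hx, blockPrefix_append_replicate, Nat.add_sub_cancel' hst.le]
  have hswap := hr.append_swap_mem_lang (by rw [hx]; exact h₁.symm)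
    (by rw [hxy]; exact h₂.symm.trans h₁.symm)
    (by rw [hxy, hL]; exact blockPrefix_append_mem_ELang P.n _ t)
  rw [hL] at hswap
  have := le_of_append_blockPrefix_append_mem_ELang
    (w := blockPrefix P.n j₁ t ++ List.replicate (t - s) false ++ List.replicate (P.n - t) false)
    (by simpa only [List.append_assoc] using hswap)
  omega
end

section
/- History-deterministic Parikh automata are closed under intersection: given HDPAs (A₁, C₁) and (A₂, C₂) over the same alphabet Σ, there exists an HDPA (A', C') with L(A', C') = L(A₁, C₁) ∩ L(A₂, C₂). -/
open scoped BigOperators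

/-!
Run the two automata in lockstep: the product reads a letter by taking a transition of each
automaton on that letter, concatenates their counter vectors, and accepts when both components
would. Its acceptance set is the intersection of the preimages of `C₁` and `C₂` under the two
coordinate projections, hence semilinear. Pairing the two resolvers letter by letter resolves the
product, because on a word of the intersection each resolver alone already builds an accepting run.
-/

theorem isLinear_iff_isLinearSet {d : ℕ} {C : Set (Fin d → ℕ)} : IsLinear C ↔ IsLinearSet C := by
  rw [isLinearSet_iff_exists_fin_addMonoidHom]
  constructor
  · rintro ⟨k, v₀, v, rfl⟩
    refine ⟨v₀, k, (Fintype.linearCombination ℕ v).toAddMonoidHom, ?_⟩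
    ext x
    simp [Set.mem_vadd_set, Fintype.linearCombination_apply, eq_comm]
  · rintro ⟨v₀, k, f, rfl⟩
    refine ⟨k, v₀, fun i => f (Pi.single i 1), ?_⟩
    have hf (c : Fin k → ℕ) : f c = ∑ i, c i • f (Pi.single i 1) :=
      calc f c = f (∑ i, c i • Pi.single i 1) := by congr 1; ext j; simp [Pi.single_apply]
        _ = _ := by simp only [map_sum, map_nsmul]
    ext x
    simp only [Set.mem_vadd_set, Set.mem_range, vadd_eq_add, exists_exists_eq_and,
      Set.mem_ofPred_eq]
    exact exists_congr fun c => by rw [hf c, eq_comm]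

theorem isSemilinear_iff_isSemilinearSet {d : ℕ} {C : Set (Fin d → ℕ)} :
    IsSemilinear C ↔ IsSemilinearSet C := by
  constructor
  · rintro ⟨m, Cs, hCs, rfl⟩
    exact .iUnion fun i => (isLinear_iff_isLinearSet.1 (hCs i)).isSemilinearSet
  · rintro ⟨S, hS, hlin, rfl⟩
    obtain ⟨m, f, rfl⟩ := hS.fin_embedding
    exact ⟨m, f, fun i => isLinear_iff_isLinearSet.2 (hlin _ ⟨i, rfl⟩), Set.sUnion_range f⟩

theorem List.isChain_and_iff {α : Type*} {R S : α → α → Prop} {l : List α} :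
    l.IsChain (fun a b => R a b ∧ S a b) ↔ l.IsChain R ∧ l.IsChain S := by
  simp only [List.isChain_iff_getElem, ← forall_and]

namespace PA

theorem isRun_iff {A : Type} {d : ℕ} {P : PA A d} {ρ : List P.Tr} :
    P.IsRun ρ ↔ (∀ t ∈ ρ, t ∈ P.trans) ∧ ρ.IsChain (fun t t' => t.2.2 = t'.1) ∧
      ∀ t, ρ.head? = some t → t.1 = P.init :=
  Iff.rfl

variable {A : Type} {d₁ d₂ : ℕ} (P₁ : PA A d₁) (P₂ : PA A d₂)

abbrev ProdTr := Fin (P₁.n * P₂.n) × (A × (Fin (d₁ + d₂) → ℕ)) × Fin (P₁.n * P₂.n)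

def prodFst (t : ProdTr P₁ P₂) : P₁.Tr :=
  ((finProdFinEquiv.symm t.1).1, (t.2.1.1, fun i => t.2.1.2 (Fin.castAdd d₂ i)),
    (finProdFinEquiv.symm t.2.2).1)

def prodSnd (t : ProdTr P₁ P₂) : P₂.Tr :=
  ((finProdFinEquiv.symm t.1).2, (t.2.1.1, fun i => t.2.1.2 (Fin.natAdd d₁ i)),
    (finProdFinEquiv.symm t.2.2).2)

def prodMk (t₁ : P₁.Tr) (t₂ : P₂.Tr) : ProdTr P₁ P₂ :=
  (finProdFinEquiv (t₁.1, t₂.1), (t₁.2.1.1, Fin.append t₁.2.1.2 t₂.2.1.2),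
    finProdFinEquiv (t₁.2.2, t₂.2.2))

variable {P₁ P₂}

@[simp]
theorem prodFst_prodMk (t₁ : P₁.Tr) (t₂ : P₂.Tr) : prodFst P₁ P₂ (prodMk P₁ P₂ t₁ t₂) = t₁ := by
  simp [prodFst, prodMk]

theorem prodSnd_prodMk {t₁ : P₁.Tr} {t₂ : P₂.Tr} (h : t₁.2.1.1 = t₂.2.1.1) :
    prodSnd P₁ P₂ (prodMk P₁ P₂ t₁ t₂) = t₂ := by
  simp [prodSnd, prodMk, h]

theorem prodMk_prodFst_prodSnd (t : ProdTr P₁ P₂) :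
    prodMk P₁ P₂ (prodFst P₁ P₂ t) (prodSnd P₁ P₂ t) = t := by
  simp only [prodFst, prodSnd, prodMk, Prod.mk.eta, Equiv.apply_symm_apply,
    Fin.append_castAdd_natAdd]

variable (P₁ P₂)

/- Reducible, so that `(P₁.prod P₂).Tr` unfolds to `ProdTr P₁ P₂` when `simp` matches the lemmas
about `prodFst` and `prodSnd` against runs of the product. -/
abbrev prod : PA A (d₁ + d₂) where
  n := P₁.n * P₂.n
  init := finProdFinEquiv (P₁.init, P₂.init)
  final := finProdFinEquiv.symm ⁻¹' (P₁.final ×ˢ P₂.final)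
  -- `prodFst t` and `prodSnd t` read the same letter, so both components move synchronously.
  trans := (fun t => (prodFst P₁ P₂ t, prodSnd P₁ P₂ t)) ⁻¹' (P₁.trans ×ˢ P₂.trans)
  transFin := (P₁.transFin.prod P₂.transFin).preimage <|
    (Function.LeftInverse.injective (g := fun p => prodMk P₁ P₂ p.1 p.2)
      fun t => prodMk_prodFst_prodSnd t).injOn
  C := {w | (fun i => w (Fin.castAdd d₂ i)) ∈ P₁.C ∧ (fun i => w (Fin.natAdd d₁ i)) ∈ P₂.C}
  hC := isSemilinear_iff_isSemilinearSet.2 <|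
    ((isSemilinear_iff_isSemilinearSet.1 P₁.hC).preimage
        (LinearMap.funLeft ℕ ℕ (Fin.castAdd d₂))).inter
      ((isSemilinear_iff_isSemilinearSet.1 P₂.hC).preimage
        (LinearMap.funLeft ℕ ℕ (Fin.natAdd d₁)))

variable {P₁ P₂}

theorem word_map_prodFst (ρ : List (P₁.prod P₂).Tr) :
    P₁.word (ρ.map (prodFst P₁ P₂)) = (P₁.prod P₂).word ρ :=
  List.map_map ..

theorem word_map_prodSnd (ρ : List (P₁.prod P₂).Tr) :
    P₂.word (ρ.map (prodSnd P₁ P₂)) = (P₁.prod P₂).word ρ :=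
  List.map_map ..

theorem image_map_prodFst (ρ : List (P₁.prod P₂).Tr) :
    P₁.image (ρ.map (prodFst P₁ P₂)) = fun i => (P₁.prod P₂).image ρ (Fin.castAdd d₂ i) :=
  (congrArg List.sum (List.map_map ..)).trans <|
    List.sum_map_hom ρ (fun t => t.2.1.2) (LinearMap.funLeft ℕ ℕ (Fin.castAdd d₂))

theorem image_map_prodSnd (ρ : List (P₁.prod P₂).Tr) :
    P₂.image (ρ.map (prodSnd P₁ P₂)) = fun i => (P₁.prod P₂).image ρ (Fin.natAdd d₁ i) :=
  (congrArg List.sum (List.map_map ..)).trans <|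
    List.sum_map_hom ρ (fun t => t.2.1.2) (LinearMap.funLeft ℕ ℕ (Fin.natAdd d₁))

theorem lastState_map_prodFst (ρ : List (P₁.prod P₂).Tr) :
    P₁.lastState (ρ.map (prodFst P₁ P₂)) =
      (finProdFinEquiv.symm ((P₁.prod P₂).lastState ρ)).1 := by
  cases h : ρ.getLast? <;> simp [lastState, h, prodFst]

theorem lastState_map_prodSnd (ρ : List (P₁.prod P₂).Tr) :
    P₂.lastState (ρ.map (prodSnd P₁ P₂)) =
      (finProdFinEquiv.symm ((P₁.prod P₂).lastState ρ)).2 := by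
  cases h : ρ.getLast? <;> simp [lastState, h, prodSnd]

theorem isRun_prod_iff {ρ : List (P₁.prod P₂).Tr} :
    (P₁.prod P₂).IsRun ρ ↔
      P₁.IsRun (ρ.map (prodFst P₁ P₂)) ∧ P₂.IsRun (ρ.map (prodSnd P₁ P₂)) := by
  have hchain : ρ.IsChain (fun t t' => t.2.2 = t'.1) ↔
      ρ.IsChain (fun t t' => (prodFst P₁ P₂ t).2.2 = (prodFst P₁ P₂ t').1) ∧
        ρ.IsChain (fun t t' => (prodSnd P₁ P₂ t).2.2 = (prodSnd P₁ P₂ t').1) := by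
    simp only [prodFst, prodSnd, ← List.isChain_and_iff, ← Prod.ext_iff, Equiv.apply_eq_iff_eq]
  have hinit (t : (P₁.prod P₂).Tr) : t.1 = (P₁.prod P₂).init ↔
      (prodFst P₁ P₂ t).1 = P₁.init ∧ (prodSnd P₁ P₂ t).1 = P₂.init :=
    (Equiv.symm_apply_eq _).symm.trans Prod.ext_iff
  simp only [isRun_iff, List.forall_mem_map, List.isChain_map, List.head?_map,
    Option.map_eq_some_iff, forall_exists_index, and_imp, forall_apply_eq_imp_iff₂, hchain, hinit,
    Set.mem_preimage, Set.mem_prod, forall_and]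
  tauto

theorem accepting_prod_iff {ρ : List (P₁.prod P₂).Tr} :
    (P₁.prod P₂).Accepting ρ ↔
      P₁.Accepting (ρ.map (prodFst P₁ P₂)) ∧ P₂.Accepting (ρ.map (prodSnd P₁ P₂)) := by
  simp only [Accepting, isRun_prod_iff, lastState_map_prodFst, lastState_map_prodSnd,
    image_map_prodFst, image_map_prodSnd, Set.mem_preimage, Set.mem_prod, Set.mem_ofPred_eq]
  tauto

theorem map_prodFst_zipWith_prodMk {ρ₁ : List P₁.Tr} {ρ₂ : List P₂.Tr}
    (h : P₁.word ρ₁ = P₂.word ρ₂) :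
    (List.zipWith (prodMk P₁ P₂) ρ₁ ρ₂).map (prodFst P₁ P₂) = ρ₁ := by
  induction ρ₁ generalizing ρ₂ with
  | nil => rfl
  | cons t₁ ρ₁ ih =>
    cases ρ₂ with
    | nil => simp [word] at h
    | cons t₂ ρ₂ =>
      simp only [word, List.map_cons, List.cons.injEq] at h
      simp [ih h.2]

theorem map_prodSnd_zipWith_prodMk {ρ₁ : List P₁.Tr} {ρ₂ : List P₂.Tr}
    (h : P₁.word ρ₁ = P₂.word ρ₂) :
    (List.zipWith (prodMk P₁ P₂) ρ₁ ρ₂).map (prodSnd P₁ P₂) = ρ₂ := by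
  induction ρ₁ generalizing ρ₂ with
  | nil => cases ρ₂ <;> simp_all [word]
  | cons t₁ ρ₁ ih =>
    cases ρ₂ with
    | nil => simp [word] at h
    | cons t₂ ρ₂ =>
      simp only [word, List.map_cons, List.cons.injEq] at h
      simp [ih h.2, prodSnd_prodMk h.1]

theorem accepting_zipWith_prodMk {ρ₁ : List P₁.Tr} {ρ₂ : List P₂.Tr} (h₁ : P₁.Accepting ρ₁)
    (h₂ : P₂.Accepting ρ₂) (hw : P₁.word ρ₁ = P₂.word ρ₂) :
    (P₁.prod P₂).Accepting (List.zipWith (prodMk P₁ P₂) ρ₁ ρ₂) :=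
  accepting_prod_iff.2
    ⟨by rwa [map_prodFst_zipWith_prodMk hw], by rwa [map_prodSnd_zipWith_prodMk hw]⟩

theorem word_zipWith_prodMk {ρ₁ : List P₁.Tr} {ρ₂ : List P₂.Tr} (hw : P₁.word ρ₁ = P₂.word ρ₂) :
    (P₁.prod P₂).word (List.zipWith (prodMk P₁ P₂) ρ₁ ρ₂) = P₁.word ρ₁ := by
  rw [← word_map_prodFst, map_prodFst_zipWith_prodMk hw]

theorem lang_prod : (P₁.prod P₂).Lang = P₁.Lang ∩ P₂.Lang := by
  ext w
  constructor
  · rintro ⟨ρ, hρ, rfl⟩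
    obtain ⟨h₁, h₂⟩ := accepting_prod_iff.1 hρ
    exact ⟨⟨_, h₁, word_map_prodFst ρ⟩, _, h₂, word_map_prodSnd ρ⟩
  · rintro ⟨⟨ρ₁, h₁, rfl⟩, ρ₂, h₂, hw⟩
    exact ⟨_, accepting_zipWith_prodMk h₁ h₂ hw.symm, word_zipWith_prodMk hw.symm⟩

def prodResolver (r₁ : List A → A → P₁.Tr) (r₂ : List A → A → P₂.Tr) (pre : List A) (a : A) :
    (P₁.prod P₂).Tr :=
  prodMk P₁ P₂ (r₁ pre a) (r₂ pre a)

theorem iterResAux_prodResolver (r₁ : List A → A → P₁.Tr) (r₂ : List A → A → P₂.Tr)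
    (pre u : List A) :
    (P₁.prod P₂).iterResAux (prodResolver r₁ r₂) pre u =
      List.zipWith (prodMk P₁ P₂) (P₁.iterResAux r₁ pre u) (P₂.iterResAux r₂ pre u) := by
  induction u generalizing pre with
  | nil => rfl
  | cons a u ih => simp only [iterResAux, ih, List.zipWith_cons_cons]; rfl

theorem IsResolver.prod {r₁ : List A → A → P₁.Tr} {r₂ : List A → A → P₂.Tr}
    (hr₁ : P₁.IsResolver r₁) (hr₂ : P₂.IsResolver r₂) :
    (P₁.prod P₂).IsResolver (prodResolver r₁ r₂) := by
  intro w hw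
  rw [lang_prod] at hw
  obtain ⟨hacc₁, hw₁⟩ := hr₁ w hw.1
  obtain ⟨hacc₂, hw₂⟩ := hr₂ w hw.2
  have hw : P₁.word (P₁.iterRes r₁ w) = P₂.word (P₂.iterRes r₂ w) := hw₁.trans hw₂.symm
  rw [iterRes, iterResAux_prodResolver]
  exact ⟨accepting_zipWith_prodMk hacc₁ hacc₂ hw, (word_zipWith_prodMk hw).trans hw₁⟩

theorem HistoryDeterministic.prod (h₁ : P₁.HistoryDeterministic)
    (h₂ : P₂.HistoryDeterministic) : (P₁.prod P₂).HistoryDeterministic :=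
  let ⟨_, hr₁⟩ := h₁
  let ⟨_, hr₂⟩ := h₂
  ⟨_, hr₁.prod hr₂⟩

end PA

/-- History-deterministic Parikh automata are closed under intersection. -/
theorem hdpa_closed_inter {A : Type} {d₁ d₂ : ℕ} (P₁ : PA A d₁) (P₂ : PA A d₂)
    (h₁ : P₁.HistoryDeterministic) (h₂ : P₂.HistoryDeterministic) :
    ∃ (d : ℕ) (P : PA A d), P.HistoryDeterministic ∧ P.Lang = P₁.Lang ∩ P₂.Lang :=
  ⟨d₁ + d₂, P₁.prod P₂, h₁.prod h₂, PA.lang_prod⟩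
end

section
/- History-deterministic Parikh automata are closed under union: given HDPAs (A₁, C₁) and (A₂, C₂) over the same alphabet Σ, there exists an HDPA accepting L(A₁, C₁) ∪ L(A₂, C₂). -/
open scoped BigOperators

namespace HDPA

/-- product of two sets of vectors, as a set over the concatenated coordinates -/
def prodSet {m n : ℕ} (C : Set (Fin m → ℕ)) (D : Set (Fin n → ℕ)) :
    Set (Fin (m + n) → ℕ) :=
  {x | x ∘ Fin.castAdd n ∈ C ∧ x ∘ Fin.natAdd m ∈ D}

lemma append_add {m n : ℕ} (a a' : Fin m → ℕ) (b b' : Fin n → ℕ) :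
    Fin.append a b + Fin.append a' b' = Fin.append (a + a') (b + b') := by
  funext i
  refine Fin.addCases (fun i => ?_) (fun i => ?_) i <;>
    simp [Fin.append_left, Fin.append_right]

lemma append_smul {m n : ℕ} (c : ℕ) (a : Fin m → ℕ) (b : Fin n → ℕ) :
    c • Fin.append a b = Fin.append (c • a) (c • b) := by
  funext i
  refine Fin.addCases (fun i => ?_) (fun i => ?_) i <;>
    simp [Fin.append_left, Fin.append_right]

lemma append_eq_self {m n : ℕ} (x : Fin (m + n) → ℕ) :
    Fin.append (x ∘ Fin.castAdd n) (x ∘ Fin.natAdd m) = x := by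
  funext i
  refine Fin.addCases (fun i => ?_) (fun i => ?_) i <;>
    simp [Fin.append_left, Fin.append_right]

lemma sum_append {ι : Type*} {m n : ℕ} (s : Finset ι) (f : ι → Fin m → ℕ) (g : ι → Fin n → ℕ) :
    ∑ i ∈ s, Fin.append (f i) (g i) = Fin.append (∑ i ∈ s, f i) (∑ i ∈ s, g i) := by
  funext j
  refine Fin.addCases (fun j => ?_) (fun j => ?_) j <;>
    simp [Finset.sum_apply, Fin.append_left, Fin.append_right]

lemma sum_addCases {k l m n : ℕ} (c : Fin (k + l) → ℕ)
    (v : Fin k → Fin m → ℕ) (w : Fin l → Fin n → ℕ) :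
    ∑ i, c i • (Fin.addCases (fun i₁ => Fin.append (v i₁) 0)
        (fun i₂ => Fin.append 0 (w i₂)) : Fin (k + l) → Fin (m + n) → ℕ) i
      = Fin.append (∑ i₁, c (Fin.castAdd l i₁) • v i₁) (∑ i₂, c (Fin.natAdd k i₂) • w i₂) := by
  rw [Fin.sum_univ_add]
  simp only [Fin.addCases_left, Fin.addCases_right, append_smul, smul_zero]
  rw [sum_append, sum_append, append_add]
  simp

lemma linear_prodSet {m n : ℕ} {C : Set (Fin m → ℕ)} {D : Set (Fin n → ℕ)}
    (hC : IsLinear C) (hD : IsLinear D) : IsLinear (HDPA.prodSet C D) := by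
  obtain ⟨k, v₀, v, rfl⟩ := hC
  obtain ⟨l, w₀, w, rfl⟩ := hD
  refine ⟨k + l, Fin.append v₀ w₀,
    Fin.addCases (fun i₁ => Fin.append (v i₁) 0) (fun i₂ => Fin.append 0 (w i₂)), ?_⟩
  ext x
  constructor
  · rintro ⟨⟨c₁, h₁⟩, ⟨c₂, h₂⟩⟩
    refine ⟨Fin.addCases c₁ c₂, ?_⟩
    rw [sum_addCases]
    simp only [Fin.addCases_left, Fin.addCases_right]
    rw [append_add, ← h₁, ← h₂, append_eq_self]
  · rintro ⟨c, rfl⟩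
    rw [sum_addCases, append_add]
    constructor
    · exact ⟨fun i₁ => c (Fin.castAdd l i₁), by funext j; simp [Fin.append_left]⟩
    · exact ⟨fun i₂ => c (Fin.natAdd k i₂), by funext j; simp [Fin.append_right]⟩

lemma semilinear_union {d : ℕ} {C D : Set (Fin d → ℕ)}
    (hC : IsSemilinear C) (hD : IsSemilinear D) : IsSemilinear (C ∪ D) := by
  obtain ⟨m, Cs, hCs, rfl⟩ := hC
  obtain ⟨l, Ds, hDs, rfl⟩ := hD
  refine ⟨m + l, fun i => Sum.elim Cs Ds (finSumFinEquiv.symm i), fun i => ?_, ?_⟩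
  · rcases h : finSumFinEquiv.symm i with j | j <;> simp [h, hCs, hDs]
  · rw [finSumFinEquiv.symm.surjective.iUnion_comp (g := fun s => Sum.elim Cs Ds s),
      Set.iUnion_sum]
    simp

lemma semilinear_prodSet {m n : ℕ} {C : Set (Fin m → ℕ)} {D : Set (Fin n → ℕ)}
    (hC : IsSemilinear C) (hD : IsSemilinear D) : IsSemilinear (HDPA.prodSet C D) := by
  obtain ⟨k, Cs, hCs, rfl⟩ := hC
  obtain ⟨l, Ds, hDs, rfl⟩ := hD
  refine ⟨k * l, fun i => HDPA.prodSet (Cs (finProdFinEquiv.symm i).1) (Ds (finProdFinEquiv.symm i).2),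
    fun i => linear_prodSet (hCs _) (hDs _), ?_⟩
  rw [finProdFinEquiv.symm.surjective.iUnion_comp
      (g := fun p : Fin k × Fin l => HDPA.prodSet (Cs p.1) (Ds p.2)), Set.iUnion_prod']
  ext x
  simp only [HDPA.prodSet, Set.mem_setOf_eq, Set.mem_iUnion]
  constructor
  · rintro ⟨⟨i, hi⟩, ⟨j, hj⟩⟩; exact ⟨i, j, hi, hj⟩
  · rintro ⟨i, j, hi, hj⟩; exact ⟨⟨i, hi⟩, ⟨j, hj⟩⟩

lemma semilinear_univ {n : ℕ} : IsSemilinear (Set.univ : Set (Fin n → ℕ)) := by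
  refine ⟨1, fun _ => Set.univ, fun _ => ⟨n, 0, fun i => Pi.single i 1, ?_⟩, by simp [Set.iUnion_const]⟩
  ext x
  simp only [Set.mem_univ, Set.mem_setOf_eq, true_iff]
  refine ⟨x, ?_⟩
  funext j
  simp [Finset.sum_apply, Pi.smul_apply, Pi.single_apply]

/-- flag set: `{y : Fin 2 → ℕ | y 0 + c = y 1 + 1}` for `c ≤ 1`. -/
def flagSet (c : ℕ) : Set (Fin 2 → ℕ) := {y | y 0 + c = y 1 + 1}

lemma flagSet_semilinear {c : ℕ} (hc : c ≤ 1) : IsSemilinear (flagSet c) := by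
  refine ⟨1, fun _ => flagSet c, fun _ => ⟨1, ![1 - c, 0], fun _ => ![1, 1], ?_⟩, by simp [Set.iUnion_const]⟩
  ext y
  simp only [flagSet, Set.mem_setOf_eq]
  constructor
  · intro h
    refine ⟨fun _ => y 1, ?_⟩
    funext j
    fin_cases j <;> simp [Finset.sum_apply] <;> omega
  · rintro ⟨e, rfl⟩
    simp [Finset.sum_apply]
    omega



open List

section Component

variable {A : Type} {d : ℕ}

/-- extended transitions: over states `Fin (P.n+1)` where `Fin.last P.n` is a dead state -/
abbrev CT (P : PA A d) := Fin (P.n + 1) × (A × (Fin d → ℕ)) × Fin (P.n + 1)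

def lift (P : PA A d) (t : P.Tr) : CT P := (t.1.castSucc, t.2.1, t.2.2.castSucc)

def ET (P : PA A d) (S : Set A) : Set (CT P) :=
  (lift P '' P.trans) ∪ {x | ∃ s a, a ∈ S ∧ x = (s, (a, 0), Fin.last P.n)}

def EF (P : PA A d) : Set (Fin (P.n + 1)) := Fin.castSucc '' P.final

open Classical in
noncomputable def flagv (P : PA A d) (q : Fin (P.n + 1)) : ℕ := if q ∈ EF P then 1 else 0

lemma flagv_le_one (P : PA A d) (q) : flagv P q ≤ 1 := by
  unfold flagv; split <;> omega

open Classical in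
lemma flagv_castSucc (P : PA A d) (q : Fin P.n) :
    flagv P q.castSucc = if q ∈ P.final then 1 else 0 := by
  have h : q.castSucc ∈ EF P ↔ q ∈ P.final :=
    (Fin.castSucc_injective _).mem_set_image
  unfold flagv
  by_cases hq : q ∈ P.final
  · rw [if_pos (h.mpr hq), if_pos hq]
  · rw [if_neg (fun hc => hq (h.mp hc)), if_neg hq]

lemma flagv_eq_one_iff (P : PA A d) (q) : flagv P q = 1 ↔ q ∈ EF P := by
  unfold flagv; split <;> simp_all

/-- the vector labelling with two appended flag coordinates -/
noncomputable def tv (P : PA A d) (y : CT P) : Fin (d + 2) → ℕ :=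
  Fin.append y.2.1.2 ![flagv P y.2.2, flagv P y.1]

open Classical in
/-- one step of the simulated (extended) run driven by resolver `r` -/
noncomputable def estep (P : PA A d) (r : List A → A → P.Tr)
    (s : Fin (P.n + 1)) (pre : List A) (a : A) : CT P :=
  if s = (r pre a).1.castSucc ∧ r pre a ∈ P.trans ∧ (r pre a).2.1.1 = a
  then (s, (a, (r pre a).2.1.2), (r pre a).2.2.castSucc)
  else (s, (a, 0), Fin.last P.n)

lemma estep_fst (P : PA A d) (r) (s) (pre) (a) : (estep P r s pre a).1 = s := by
  unfold estep; split <;> rfl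

lemma estep_letter (P : PA A d) (r) (s) (pre) (a) : (estep P r s pre a).2.1.1 = a := by
  unfold estep; split <;> rfl

lemma estep_mem (P : PA A d) {S : Set A} (r) (s) (pre) {a} (ha : a ∈ S) :
    estep P r s pre a ∈ ET P S := by
  unfold estep
  split
  · rename_i h
    refine Or.inl ⟨r pre a, h.2.1, ?_⟩
    simp only [lift, Prod.ext_iff]
    exact ⟨h.1.symm, ⟨h.2.2, trivial⟩, trivial⟩
  · exact Or.inr ⟨s, a, ha, rfl⟩

noncomputable def stp (P : PA A d) (r : List A → A → P.Tr) (w : List A) :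
    Fin (P.n + 1) × List A :=
  w.foldl (fun p a => ((estep P r p.1 p.2 a).2.2, p.2 ++ [a])) (P.init.castSucc, [])

noncomputable def st (P : PA A d) (r : List A → A → P.Tr) (w : List A) : Fin (P.n + 1) :=
  (stp P r w).1

lemma stp_snd (P : PA A d) (r) :
    ∀ (w : List A) (s : Fin (P.n + 1)) (pre : List A),
      (w.foldl (fun p a => ((estep P r p.1 p.2 a).2.2, p.2 ++ [a])) (s, pre)).2 = pre ++ w := by
  intro w
  induction w with
  | nil => simp
  | cons a w ih => intro s pre; simp [ih]

lemma st_nil (P : PA A d) (r) : st P r [] = P.init.castSucc := rfl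

lemma st_snoc (P : PA A d) (r) (w : List A) (a : A) :
    st P r (w ++ [a]) = (estep P r (st P r w) w a).2.2 := by
  unfold st stp
  rw [List.foldl_append]
  have h2 : (stp P r w).2 = w := stp_snd P r w _ _
  show ((estep P r (stp P r w).1 (stp P r w).2 a).2.2, _).1 = _
  rw [h2]
  rfl

noncomputable def epathAux (P : PA A d) (r : List A → A → P.Tr) :
    List A → List A → List (CT P)
  | _, [] => []
  | pre, a :: rest => estep P r (st P r pre) pre a :: epathAux P r (pre ++ [a]) rest

noncomputable def epath (P : PA A d) (r : List A → A → P.Tr) (w : List A) : List (CT P) :=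
  epathAux P r [] w

lemma epathAux_append (P : PA A d) (r) :
    ∀ (l₁ pre l₂ : List A),
      epathAux P r pre (l₁ ++ l₂) = epathAux P r pre l₁ ++ epathAux P r (pre ++ l₁) l₂ := by
  intro l₁
  induction l₁ with
  | nil => intro pre l₂; simp [epathAux]
  | cons a l ih =>
    intro pre l₂
    simp only [List.cons_append, epathAux, List.append_eq]
    rw [ih (pre ++ [a]) l₂]
    simp [List.append_assoc]

lemma epath_snoc (P : PA A d) (r) (w : List A) (a : A) :
    epath P r (w ++ [a]) = epath P r w ++ [estep P r (st P r w) w a] := by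
  unfold epath
  rw [epathAux_append]
  simp [epathAux]

lemma epath_length (P : PA A d) (r) : ∀ (w pre : List A), (epathAux P r pre w).length = w.length := by
  intro w
  induction w with
  | nil => intro pre; rfl
  | cons a l ih => intro pre; simp [epathAux, ih]

/-- structural facts about `epath` that need no assumption on `r` -/
lemma epath_struct (P : PA A d) (r) (w : List A) :
    (epath P r w).Chain' (fun t t' => t.2.2 = t'.1) ∧
    (∀ u, (epath P r w).head? = some u → u.1 = P.init.castSucc) ∧
    ((epath P r w).getLast?).elim P.init.castSucc (fun t => t.2.2) = st P r w := by
  induction w using List.reverseRecOn with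
  | nil => exact ⟨List.isChain_nil, by intro u h; simp [epath, epathAux] at h, rfl⟩
  | append_singleton w a ih =>
    obtain ⟨hc, hh, hl⟩ := ih
    rw [epath_snoc]
    refine ⟨?_, ?_, ?_⟩
    · unfold List.Chain'; rw [List.isChain_append]
      refine ⟨hc, List.isChain_singleton _, ?_⟩
      intro x hx y hy
      simp only [List.head?_cons, Option.mem_def, Option.some.injEq] at hy
      subst hy
      rw [estep_fst]
      rw [Option.mem_def] at hx
      simpa [hx] using hl
    · intro u hu
      rcases hE : epath P r w with _ | ⟨t, L⟩
      · have hw : w = [] := by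
          have hlen := epath_length P r w []
          rw [show epathAux P r [] w = epath P r w from rfl, hE] at hlen
          exact List.length_eq_zero_iff.mp hlen.symm
        subst hw
        rw [hE] at hu
        simp only [List.nil_append, List.head?_cons, Option.some.injEq] at hu
        subst hu
        rw [estep_fst]
        rfl
      · rw [hE] at hu
        simp only [List.cons_append, List.head?_cons, Option.some.injEq] at hu
        subst hu
        exact hh t (by rw [hE]; rfl)
    · rw [List.getLast?_concat]
      simp [st_snoc]

end Component



section Component2

variable {A : Type} {d : ℕ}

lemma telescope (P : PA A d) :
    ∀ (L : List (CT P)) (s : Fin (P.n + 1)),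
      L.Chain' (fun t t' => t.2.2 = t'.1) →
      (∀ u, L.head? = some u → u.1 = s) →
      (L.map (fun t => flagv P t.2.2)).sum + flagv P s
        = (L.map (fun t => flagv P t.1)).sum + flagv P ((L.getLast?).elim s (fun t => t.2.2)) := by
  intro L
  induction L with
  | nil => intro s _ _; rfl
  | cons t L ih =>
    intro s hc hh
    have hs : t.1 = s := hh t rfl
    subst hs
    unfold List.Chain' at hc; rw [List.isChain_cons] at hc
    rcases L with _ | ⟨u, L'⟩
    · simp only [List.map_cons, List.map_nil, List.sum_cons, List.sum_nil,
        List.getLast?_singleton, Option.elim_some]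
      omega
    · have hht : ∀ v, (u :: L').head? = some v → v.1 = t.2.2 := by
        intro v hv
        simp only [List.head?_cons, Option.some.injEq] at hv
        subst hv
        exact (hc.1 u rfl).symm
      have hih := ih t.2.2 hc.2 hht
      rcases hgl : (u :: L').getLast? with _ | x
      · rw [List.getLast?_eq_none_iff] at hgl
        exact absurd hgl (by simp)
      · rw [List.getLast?_cons_cons]
        rw [hgl] at hih ⊢
        simp only [Option.elim_some] at hih ⊢
        simp only [List.map_cons, List.sum_cons] at *
        omega

lemma all_real (P : PA A d) (S : Set A) (L : List (CT P)) :
    ∀ (s : Fin (P.n + 1)),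
      (∀ t ∈ L, t ∈ ET P S) → L.Chain' (fun t t' => t.2.2 = t'.1) →
      ((L.getLast?).elim s (fun t => t.2.2)) ≠ Fin.last P.n →
      ∀ t ∈ L, t ∈ lift P '' P.trans := by
  induction L using List.reverseRecOn with
  | nil => intro s _ _ _ t ht; simp at ht
  | append_singleton M u ih =>
    intro s hET hc hlast t ht
    rw [List.getLast?_concat] at hlast
    simp only [Option.elim_some] at hlast
    have hu : u ∈ lift P '' P.trans := by
      rcases hET u (by simp) with h | h
      · exact h
      · exfalso
        obtain ⟨s', a, _, he⟩ := h
        rw [he] at hlast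
        exact hlast rfl
    rcases List.mem_append.mp ht with hM | hu'
    · rcases hcM : M.getLast? with _ | x
      · rw [List.getLast?_eq_none_iff] at hcM
        subst hcM
        simp at hM
      · have hchain := List.isChain_append.mp hc
        have hx : x.2.2 = u.1 := hchain.2.2 x (by rw [hcM]; rfl) u rfl
        obtain ⟨t₀, _, hlift⟩ := hu
        have hu1 : u.1 ≠ Fin.last P.n := by
          rw [← hlift]
          exact (Fin.castSucc_lt_last t₀.1).ne
        refine ih s (fun t' ht' => hET t' (by simp [ht'])) hchain.1 ?_ t hM
        rw [hcM]
        simpa [hx] using hu1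
    · simpa [List.mem_singleton.mp hu'] using hu

lemma iterResAux_append {P : PA A d} (r : List A → A → P.Tr) :
    ∀ (l₁ pre l₂ : List A),
      P.iterResAux r pre (l₁ ++ l₂) = P.iterResAux r pre l₁ ++ P.iterResAux r (pre ++ l₁) l₂ := by
  intro l₁
  induction l₁ with
  | nil => intro pre l₂; simp [PA.iterResAux]
  | cons a l ih =>
    intro pre l₂
    simp only [List.cons_append, PA.iterResAux, List.append_eq]
    rw [ih (pre ++ [a]) l₂]
    simp [List.append_assoc]

lemma iterResAux_length {P : PA A d} (r : List A → A → P.Tr) :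
    ∀ (l pre : List A), (P.iterResAux r pre l).length = l.length := by
  intro l
  induction l with
  | nil => intro pre; rfl
  | cons a l ih => intro pre; simp [PA.iterResAux, ih]

lemma lastState_concat {P : PA A d} (ρ : List P.Tr) (t : P.Tr) :
    P.lastState (ρ ++ [t]) = t.2.2 := by
  simp [PA.lastState, List.getLast?_concat]

open Classical in
lemma follow (P : PA A d) (r : List A → A → P.Tr) (w : List A)
    (hrun : P.IsRun (P.iterRes r w)) (hword : P.word (P.iterRes r w) = w) :
    ∀ u, u <+: w →
      epath P r u = (P.iterRes r u).map (lift P) ∧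
      st P r u = (P.lastState (P.iterRes r u)).castSucc := by
  intro u
  induction u using List.reverseRecOn with
  | nil => intro _; exact ⟨rfl, rfl⟩
  | append_singleton u a ih =>
    intro hu
    obtain ⟨v, hv⟩ := hu
    have hu' : u <+: w := ⟨a :: v, by rw [← hv]; simp⟩
    obtain ⟨hmap, hst⟩ := ih hu'
    have hw' : w = u ++ a :: v := by rw [← hv]; simp
    obtain ⟨hrt, hrc, hrh⟩ := hrun
    have hdec : P.iterRes r w = P.iterRes r u ++ r u a :: P.iterResAux r (u ++ [a]) v := by
      rw [hw']
      show P.iterResAux r [] (u ++ a :: v) = _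
      rw [show u ++ a :: v = u ++ ([a] ++ v) by simp, iterResAux_append r u [] ([a] ++ v)]
      simp only [List.nil_append]
      rw [iterResAux_append r [a] u v]
      simp [PA.iterRes, PA.iterResAux]
    have hmem : r u a ∈ P.trans := by
      refine hrt _ ?_
      rw [hdec]
      exact List.mem_append_right _ (List.mem_cons_self)
    have hlet : (r u a).2.1.1 = a := by
      have hw2 := hword
      rw [hdec, hw'] at hw2
      unfold PA.word at hw2
      rw [List.map_append, List.map_cons] at hw2
      have hlen : (List.map (fun t => t.2.1.1) (P.iterRes r u)).length = u.length := by
        rw [List.length_map]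
        exact iterResAux_length r u []
      obtain ⟨-, h2⟩ := List.append_inj hw2 hlen
      exact (List.cons_eq_cons.mp h2).1
    have hst2 : P.lastState (P.iterRes r u) = (r u a).1 := by
      rcases hρu : (P.iterRes r u).getLast? with _ | x
      · rw [List.getLast?_eq_none_iff] at hρu
        have hh := hrh (r u a)
        rw [hdec, hρu] at hh
        simp only [List.nil_append, List.head?_cons, Option.some.injEq, forall_const] at hh
        rw [PA.lastState, hρu]
        exact hh.symm
      · have hch := hrc
        rw [hdec] at hch
        have hjun := (List.isChain_append.mp hch).2.2 x (by rw [hρu]; rfl) (r u a) rfl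
        rw [PA.lastState, hρu]
        exact hjun
    have hvalid : st P r u = (r u a).1.castSucc ∧ r u a ∈ P.trans ∧ (r u a).2.1.1 = a :=
      ⟨by rw [hst, hst2], hmem, hlet⟩
    have hestep : estep P r (st P r u) u a = lift P (r u a) := by
      unfold estep
      rw [if_pos hvalid]
      simp only [lift, Prod.ext_iff]
      exact ⟨hvalid.1, ⟨hlet.symm, trivial⟩, trivial⟩
    have hiter : P.iterRes r (u ++ [a]) = P.iterRes r u ++ [r u a] := by
      show P.iterResAux r [] (u ++ [a]) = _
      rw [iterResAux_append r u [] [a]]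
      simp [PA.iterRes, PA.iterResAux]
    constructor
    · rw [epath_snoc, hestep, hiter, List.map_append, hmap, List.map_singleton]
    · rw [st_snoc, hestep, hiter, lastState_concat]
      rfl

lemma epath_mem (P : PA A d) {S : Set A} (r : List A → A → P.Tr) :
    ∀ (w : List A), (∀ a ∈ w, a ∈ S) → ∀ t ∈ epath P r w, t ∈ ET P S := by
  intro w
  induction w using List.reverseRecOn with
  | nil => intro _ t ht; simp [epath, epathAux] at ht
  | append_singleton w a ih =>
    intro hw t ht
    rw [epath_snoc] at ht
    rcases List.mem_append.mp ht with h | h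
    · exact ih (fun b hb => hw b (by simp [hb])) t h
    · rw [List.mem_singleton.mp h]
      exact estep_mem P r _ w (hw a (by simp))

lemma epath_letters (P : PA A d) (r : List A → A → P.Tr) :
    ∀ (w : List A), (epath P r w).map (fun t => t.2.1.1) = w := by
  intro w
  induction w using List.reverseRecOn with
  | nil => rfl
  | append_singleton w a ih =>
    rw [epath_snoc, List.map_append, ih, List.map_singleton, estep_letter]

end Component2


section Product

variable {A : Type} {d₁ d₂ : ℕ}

/-- list-sum helpers -/
lemma list_sum_apply {m : ℕ} (l : List (Fin m → ℕ)) (j : Fin m) :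
    l.sum j = (l.map (fun f => f j)).sum := by
  induction l with
  | nil => rfl
  | cons f l ih => simp [ih]

lemma list_sum_append {β : Type*} {m n : ℕ} (l : List β) (f : β → Fin m → ℕ)
    (g : β → Fin n → ℕ) :
    (l.map (fun t => Fin.append (f t) (g t))).sum
      = Fin.append ((l.map f).sum) ((l.map g).sum) := by
  funext j
  refine Fin.addCases (fun j => ?_) (fun j => ?_) j
  · rw [Fin.append_left, list_sum_apply, list_sum_apply]
    simp only [List.map_map, Function.comp_def, Fin.append_left]
  · rw [Fin.append_right, list_sum_apply, list_sum_apply]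
    simp only [List.map_map, Function.comp_def, Fin.append_right]

lemma vec2_sum {β : Type*} (l : List β) (f g : β → ℕ) :
    (l.map (fun t => (![f t, g t] : Fin 2 → ℕ))).sum = ![(l.map f).sum, (l.map g).sum] := by
  funext j
  fin_cases j <;>
  · rw [list_sum_apply, List.map_map]
    simp [Function.comp_def]

lemma sum_tv {d : ℕ} (P : PA A d) (L : List (CT P)) :
    (L.map (tv P)).sum
      = Fin.append ((L.map (fun t => t.2.1.2)).sum)
          ![(L.map (fun t => flagv P t.2.2)).sum, (L.map (fun t => flagv P t.1)).sum] := by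
  have h : (L.map (tv P)).sum
      = (L.map (fun t => Fin.append (fun i => t.2.1.2 i)
          (![flagv P t.2.2, flagv P t.1] : Fin 2 → ℕ))).sum := rfl
  rw [h, list_sum_append, vec2_sum]

/-- letters appearing on transitions of either automaton -/
def SL (P₁ : PA A d₁) (P₂ : PA A d₂) : Set A :=
  ((fun t => t.2.1.1) '' P₁.trans) ∪ ((fun t => t.2.1.1) '' P₂.trans)

lemma SL_finite (P₁ : PA A d₁) (P₂ : PA A d₂) : (SL P₁ P₂).Finite :=
  (P₁.transFin.image _).union (P₂.transFin.image _)

lemma ET_finite {d : ℕ} (P : PA A d) {S : Set A} (hS : S.Finite) : (ET P S).Finite := by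
  refine (P.transFin.image _).union ?_
  have : {x : CT P | ∃ s a, a ∈ S ∧ x = (s, (a, 0), Fin.last P.n)}
      = (fun p : Fin (P.n + 1) × A => (p.1, (p.2, (0 : Fin d → ℕ)), Fin.last P.n)) ''
          (Set.univ ×ˢ S) := by
    ext x
    simp only [Set.mem_setOf_eq, Set.mem_image, Set.mem_prod, Set.mem_univ, true_and,
      Prod.exists]
    constructor
    · rintro ⟨s, a, ha, rfl⟩; exact ⟨s, a, ha, rfl⟩
    · rintro ⟨s, a, ha, rfl⟩; exact ⟨s, a, ha, rfl⟩
  rw [this]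
  exact (Set.finite_univ.prod hS).image _

variable (P₁ : PA A d₁) (P₂ : PA A d₂)

abbrev PTr := Fin ((P₁.n + 1) * (P₂.n + 1)) × (A × (Fin ((d₁ + 2) + (d₂ + 2)) → ℕ)) ×
    Fin ((P₁.n + 1) * (P₂.n + 1))

noncomputable def mk2 (y : CT P₁) (z : CT P₂) : PTr P₁ P₂ :=
  (finProdFinEquiv (y.1, z.1),
    (y.2.1.1, Fin.append (tv P₁ y) (tv P₂ z)),
    finProdFinEquiv (y.2.2, z.2.2))

def pfinal : Set (Fin ((P₁.n + 1) * (P₂.n + 1))) := Set.univ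

noncomputable def ptrans : Set (PTr P₁ P₂) :=
  {x | ∃ y ∈ ET P₁ (SL P₁ P₂), ∃ z ∈ ET P₂ (SL P₁ P₂),
    y.2.1.1 = z.2.1.1 ∧ x = mk2 P₁ P₂ y z}

lemma ptrans_finite : (ptrans P₁ P₂).Finite := by
  have h : ptrans P₁ P₂ ⊆ (fun p : CT P₁ × CT P₂ => mk2 P₁ P₂ p.1 p.2) ''
      ((ET P₁ (SL P₁ P₂)) ×ˢ (ET P₂ (SL P₁ P₂))) := by
    rintro x ⟨y, hy, z, hz, -, rfl⟩
    exact ⟨(y, z), ⟨hy, hz⟩, rfl⟩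
  exact Set.Finite.subset (((ET_finite P₁ (SL_finite P₁ P₂)).prod
    (ET_finite P₂ (SL_finite P₁ P₂))).image _) h

noncomputable def CA : Set (Fin ((d₁ + 2) + (d₂ + 2)) → ℕ) :=
  prodSet (prodSet P₁.C (flagSet (flagv P₁ P₁.init.castSucc))) (Set.univ : Set (Fin (d₂ + 2) → ℕ))

noncomputable def CB : Set (Fin ((d₁ + 2) + (d₂ + 2)) → ℕ) :=
  prodSet (Set.univ : Set (Fin (d₁ + 2) → ℕ)) (prodSet P₂.C (flagSet (flagv P₂ P₂.init.castSucc)))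

lemma CAB_semilinear :
    IsSemilinear ((CA P₁ (d₂ := d₂)) ∪ (CB P₂ (d₁ := d₁))) := by
  refine semilinear_union ?_ ?_
  · exact semilinear_prodSet
      (semilinear_prodSet P₁.hC (flagSet_semilinear (flagv_le_one _ _))) semilinear_univ
  · exact semilinear_prodSet semilinear_univ
      (semilinear_prodSet P₂.hC (flagSet_semilinear (flagv_le_one _ _)))

noncomputable def Pu : PA A ((d₁ + 2) + (d₂ + 2)) where
  n := (P₁.n + 1) * (P₂.n + 1)
  init := finProdFinEquiv (P₁.init.castSucc, P₂.init.castSucc)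
  final := pfinal P₁ P₂
  trans := ptrans P₁ P₂
  transFin := ptrans_finite P₁ P₂
  C := CA P₁ ∪ CB P₂
  hC := CAB_semilinear P₁ P₂

variable (r₁ : List A → A → P₁.Tr) (r₂ : List A → A → P₂.Tr)

noncomputable def R2 : List A → A → (Pu P₁ P₂).Tr := fun pre a =>
  mk2 P₁ P₂ (estep P₁ r₁ (st P₁ r₁ pre) pre a) (estep P₂ r₂ (st P₂ r₂ pre) pre a)

lemma iterR_zip : ∀ (w pre : List A),
    (Pu P₁ P₂).iterResAux (R2 P₁ P₂ r₁ r₂) pre w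
      = List.zipWith (mk2 P₁ P₂) (epathAux P₁ r₁ pre w) (epathAux P₂ r₂ pre w) := by
  intro w
  induction w with
  | nil => intro pre; rfl
  | cons a l ih =>
    intro pre
    have h1 : epathAux P₁ r₁ pre (a :: l)
        = estep P₁ r₁ (st P₁ r₁ pre) pre a :: epathAux P₁ r₁ (pre ++ [a]) l := rfl
    have h2 : epathAux P₂ r₂ pre (a :: l)
        = estep P₂ r₂ (st P₂ r₂ pre) pre a :: epathAux P₂ r₂ (pre ++ [a]) l := rfl
    have h3 : (Pu P₁ P₂).iterResAux (R2 P₁ P₂ r₁ r₂) pre (a :: l)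
        = R2 P₁ P₂ r₁ r₂ pre a :: (Pu P₁ P₂).iterResAux (R2 P₁ P₂ r₁ r₂) (pre ++ [a]) l := rfl
    rw [h1, h2, h3, List.zipWith_cons_cons, ih]
    rfl

end Product


section Product2

variable {A : Type} {d₁ d₂ : ℕ} (P₁ : PA A d₁) (P₂ : PA A d₂)
  (r₁ : List A → A → P₁.Tr) (r₂ : List A → A → P₂.Tr)

lemma R2_fst (pre : List A) (a : A) :
    (R2 P₁ P₂ r₁ r₂ pre a).1 = finProdFinEquiv (st P₁ r₁ pre, st P₂ r₂ pre) := by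
  show (mk2 P₁ P₂ _ _).1 = _
  rw [show (mk2 P₁ P₂ (estep P₁ r₁ (st P₁ r₁ pre) pre a) (estep P₂ r₂ (st P₂ r₂ pre) pre a)).1
    = finProdFinEquiv ((estep P₁ r₁ (st P₁ r₁ pre) pre a).1,
        (estep P₂ r₂ (st P₂ r₂ pre) pre a).1) from rfl, estep_fst, estep_fst]

lemma iterRes_snoc {d : ℕ} {P : PA A d} (r : List A → A → P.Tr) (w : List A) (a : A) :
    P.iterRes r (w ++ [a]) = P.iterRes r w ++ [r w a] := by
  show P.iterResAux r [] (w ++ [a]) = _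
  rw [iterResAux_append r w [] [a]]
  simp [PA.iterRes, PA.iterResAux]

lemma master (w : List A) (hw : ∀ a ∈ w, a ∈ SL P₁ P₂) :
    (Pu P₁ P₂).IsRun ((Pu P₁ P₂).iterRes (R2 P₁ P₂ r₁ r₂) w) ∧
    (Pu P₁ P₂).lastState ((Pu P₁ P₂).iterRes (R2 P₁ P₂ r₁ r₂) w)
      = finProdFinEquiv (st P₁ r₁ w, st P₂ r₂ w) := by
  induction w using List.reverseRecOn with
  | nil =>
    exact ⟨⟨fun t ht => absurd ht List.not_mem_nil, List.isChain_nil,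
      fun t h => by cases h⟩, rfl⟩
  | append_singleton w a ih =>
    have hw' : ∀ b ∈ w, b ∈ SL P₁ P₂ := fun b hb => hw b (by simp [hb])
    have ha : a ∈ SL P₁ P₂ := hw a (by simp)
    obtain ⟨⟨hT, hC, hH⟩, hL⟩ := ih hw'
    have hsnoc := iterRes_snoc (R2 P₁ P₂ r₁ r₂) w a
    have hmemR : R2 P₁ P₂ r₁ r₂ w a ∈ (Pu P₁ P₂).trans := by
      refine ⟨estep P₁ r₁ (st P₁ r₁ w) w a, estep_mem P₁ r₁ _ w ha,
        estep P₂ r₂ (st P₂ r₂ w) w a, estep_mem P₂ r₂ _ w ha, ?_, rfl⟩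
      rw [estep_letter, estep_letter]
    refine ⟨⟨?_, ?_, ?_⟩, ?_⟩
    · intro t ht
      rw [hsnoc] at ht
      rcases List.mem_append.mp ht with h | h
      · exact hT t h
      · rw [List.mem_singleton.mp h]; exact hmemR
    · unfold List.Chain'; rw [hsnoc, List.isChain_append]
      refine ⟨hC, List.isChain_singleton _, ?_⟩
      intro x hx y hy
      simp only [List.head?_cons, Option.mem_def, Option.some.injEq] at hy
      subst hy
      rw [R2_fst]
      rw [Option.mem_def] at hx
      rw [← hL, PA.lastState, hx]
      rfl
    · intro t ht
      rw [hsnoc] at ht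
      rcases hE : (Pu P₁ P₂).iterRes (R2 P₁ P₂ r₁ r₂) w with _ | ⟨u, L⟩
      · have hwnil : w = [] := by
          have := iterResAux_length (R2 P₁ P₂ r₁ r₂) w []
          rw [show (Pu P₁ P₂).iterResAux (R2 P₁ P₂ r₁ r₂) [] w
            = (Pu P₁ P₂).iterRes (R2 P₁ P₂ r₁ r₂) w from rfl, hE] at this
          exact List.length_eq_zero_iff.mp this.symm
        subst hwnil
        rw [hE] at ht
        simp only [List.nil_append, List.head?_cons, Option.some.injEq] at ht
        subst ht
        rw [R2_fst]
        rfl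
      · rw [hE] at ht
        simp only [List.cons_append, List.head?_cons, Option.some.injEq] at ht
        subst ht
        exact hH u (by rw [hE]; rfl)
    · rw [hsnoc, lastState_concat, st_snoc, st_snoc]
      rfl

noncomputable def proj1 (x : PTr P₁ P₂) : CT P₁ :=
  ((finProdFinEquiv.symm x.1).1,
    (x.2.1.1, fun i => x.2.1.2 (Fin.castAdd (d₂ + 2) (Fin.castAdd 2 i))),
    (finProdFinEquiv.symm x.2.2).1)

noncomputable def proj2 (x : PTr P₁ P₂) : CT P₂ :=
  ((finProdFinEquiv.symm x.1).2,
    (x.2.1.1, fun i => x.2.1.2 (Fin.natAdd (d₁ + 2) (Fin.castAdd 2 i))),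
    (finProdFinEquiv.symm x.2.2).2)

lemma proj1_mk2 (y : CT P₁) (z : CT P₂) : proj1 P₁ P₂ (mk2 P₁ P₂ y z) = y := by
  unfold proj1 mk2
  simp only [Equiv.symm_apply_apply]
  refine Prod.ext rfl (Prod.ext (Prod.ext rfl ?_) rfl)
  funext i
  show Fin.append (tv P₁ y) (tv P₂ z) (Fin.castAdd (d₂ + 2) (Fin.castAdd 2 i)) = _
  rw [Fin.append_left]
  show Fin.append y.2.1.2 _ (Fin.castAdd 2 i) = _
  rw [Fin.append_left]

lemma proj2_mk2 (y : CT P₁) (z : CT P₂) (h : y.2.1.1 = z.2.1.1) :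
    proj2 P₁ P₂ (mk2 P₁ P₂ y z) = z := by
  unfold proj2 mk2
  simp only [Equiv.symm_apply_apply]
  refine Prod.ext rfl (Prod.ext (Prod.ext h ?_) rfl)
  funext i
  show Fin.append (tv P₁ y) (tv P₂ z) (Fin.natAdd (d₁ + 2) (Fin.castAdd 2 i)) = _
  rw [Fin.append_right]
  show Fin.append z.2.1.2 _ (Fin.castAdd 2 i) = _
  rw [Fin.append_left]

lemma ptrans_decomp {t : PTr P₁ P₂} (ht : t ∈ ptrans P₁ P₂) :
    t.2.1.2 = Fin.append (tv P₁ (proj1 P₁ P₂ t)) (tv P₂ (proj2 P₁ P₂ t)) := by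
  obtain ⟨y, hy, z, hz, hlet, rfl⟩ := ht
  rw [proj1_mk2, proj2_mk2 P₁ P₂ y z hlet]
  rfl

lemma image_decomp (ρ : List (PTr P₁ P₂))
    (hdec : ∀ t ∈ ρ, t ∈ ptrans P₁ P₂) :
    (ρ.map (fun t => t.2.1.2)).sum
      = Fin.append (((ρ.map (proj1 P₁ P₂)).map (tv P₁)).sum)
          (((ρ.map (proj2 P₁ P₂)).map (tv P₂)).sum) := by
  rw [List.map_congr_left (fun t ht => ptrans_decomp P₁ P₂ (hdec t ht))]
  rw [List.map_map, List.map_map]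
  exact list_sum_append ρ _ _

lemma map_proj1_zip : ∀ (L₁ : List (CT P₁)) (L₂ : List (CT P₂)),
    L₁.length = L₂.length →
    (List.zipWith (mk2 P₁ P₂) L₁ L₂).map (proj1 P₁ P₂) = L₁ := by
  intro L₁
  induction L₁ with
  | nil => intro L₂ _; rfl
  | cons y L ih =>
    intro L₂ hlen
    rcases L₂ with _ | ⟨z, L₂'⟩
    · simp at hlen
    · simp only [List.zipWith_cons_cons, List.map_cons, proj1_mk2]
      rw [ih L₂' (by simpa using hlen)]

lemma map_proj2_zip : ∀ (L₁ : List (CT P₁)) (L₂ : List (CT P₂)),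
    L₁.map (fun t => t.2.1.1) = L₂.map (fun t => t.2.1.1) →
    (List.zipWith (mk2 P₁ P₂) L₁ L₂).map (proj2 P₁ P₂) = L₂ := by
  intro L₁
  induction L₁ with
  | nil =>
    intro L₂ h
    rcases L₂ with _ | _
    · rfl
    · simp at h
  | cons y L ih =>
    intro L₂ hlen
    rcases L₂ with _ | ⟨z, L₂'⟩
    · simp at hlen
    · simp only [List.map_cons, List.cons_eq_cons] at hlen
      simp only [List.zipWith_cons_cons, List.map_cons, proj2_mk2 P₁ P₂ y z hlen.1]
      rw [ih L₂' hlen.2]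

lemma letters_zip : ∀ (L₁ : List (CT P₁)) (L₂ : List (CT P₂)),
    L₁.length = L₂.length →
    (List.zipWith (mk2 P₁ P₂) L₁ L₂).map (fun t => t.2.1.1)
      = L₁.map (fun t => t.2.1.1) := by
  intro L₁
  induction L₁ with
  | nil => intro L₂ _; rfl
  | cons y L ih =>
    intro L₂ hlen
    rcases L₂ with _ | ⟨z, L₂'⟩
    · simp at hlen
    · simp only [List.zipWith_cons_cons, List.map_cons]
      rw [ih L₂' (by simpa using hlen)]
      rfl

end Product2


section Product3

variable {A : Type} {d₁ d₂ : ℕ} (P₁ : PA A d₁) (P₂ : PA A d₂)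
  (r₁ : List A → A → P₁.Tr) (r₂ : List A → A → P₂.Tr)

lemma epath_len' {d : ℕ} (P : PA A d) (r : List A → A → P.Tr) (w : List A) :
    (epath P r w).length = w.length := epath_length P r w []

lemma word_R2 (w : List A) :
    (Pu P₁ P₂).word ((Pu P₁ P₂).iterRes (R2 P₁ P₂ r₁ r₂) w) = w := by
  have hz : (Pu P₁ P₂).iterRes (R2 P₁ P₂ r₁ r₂) w
      = List.zipWith (mk2 P₁ P₂) (epath P₁ r₁ w) (epath P₂ r₂ w) :=
    iterR_zip P₁ P₂ r₁ r₂ w []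
  show ((Pu P₁ P₂).iterRes (R2 P₁ P₂ r₁ r₂) w).map (fun t => t.2.1.1) = w
  rw [hz]
  exact (letters_zip P₁ P₂ _ _ (by rw [epath_len', epath_len'])).trans
    (epath_letters P₁ r₁ w)

lemma resolve_left (w : List A) (hacc : P₁.Accepting (P₁.iterRes r₁ w))
    (hword : P₁.word (P₁.iterRes r₁ w) = w) :
    (Pu P₁ P₂).Accepting ((Pu P₁ P₂).iterRes (R2 P₁ P₂ r₁ r₂) w) := by
  have hlet : ∀ a ∈ w, a ∈ SL P₁ P₂ := by
    intro a haw
    rw [← hword] at haw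
    obtain ⟨t, ht, rfl⟩ := List.mem_map.mp haw
    exact Or.inl ⟨t, hacc.1.1 t ht, rfl⟩
  obtain ⟨hrun, hlast⟩ := master P₁ P₂ r₁ r₂ w hlet
  refine ⟨hrun, trivial, ?_⟩
  obtain ⟨hmapmap, hstw⟩ := follow P₁ r₁ w hacc.1 hword w (List.prefix_refl w)
  have hz : (Pu P₁ P₂).iterRes (R2 P₁ P₂ r₁ r₂) w
      = List.zipWith (mk2 P₁ P₂) (epath P₁ r₁ w) (epath P₂ r₂ w) :=
    iterR_zip P₁ P₂ r₁ r₂ w []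
  set ρ := (Pu P₁ P₂).iterRes (R2 P₁ P₂ r₁ r₂) w with hρdef
  have hρ1 : ρ.map (proj1 P₁ P₂) = epath P₁ r₁ w := by
    rw [hz]
    exact map_proj1_zip P₁ P₂ _ _ (by rw [epath_len', epath_len'])
  have himg : (Pu P₁ P₂).image ρ
      = Fin.append (((ρ.map (proj1 P₁ P₂)).map (tv P₁)).sum)
          (((ρ.map (proj2 P₁ P₂)).map (tv P₂)).sum) := image_decomp P₁ P₂ ρ hrun.1
  rw [hρ1] at himg
  have hxl : (Pu P₁ P₂).image ρ ∘ Fin.castAdd (d₂ + 2)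
      = ((epath P₁ r₁ w).map (tv P₁)).sum := by
    funext i
    show (Pu P₁ P₂).image ρ (Fin.castAdd (d₂ + 2) i) = _
    rw [himg, Fin.append_left]
  have hsv := sum_tv P₁ (epath P₁ r₁ w)
  have hveceq : ((epath P₁ r₁ w).map (fun t => t.2.1.2)).sum
      = P₁.image (P₁.iterRes r₁ w) := by
    rw [hmapmap, List.map_map]
    rfl
  have hC1 : ((Pu P₁ P₂).image ρ ∘ Fin.castAdd (d₂ + 2)) ∘ Fin.castAdd 2 ∈ P₁.C := by
    have heq : ((Pu P₁ P₂).image ρ ∘ Fin.castAdd (d₂ + 2)) ∘ Fin.castAdd 2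
        = P₁.image (P₁.iterRes r₁ w) := by
      funext i
      show ((Pu P₁ P₂).image ρ ∘ Fin.castAdd (d₂ + 2)) (Fin.castAdd 2 i) = _
      rw [hxl, hsv, Fin.append_left, hveceq]
    rw [heq]
    exact hacc.2.2
  have hval : ∀ j : Fin 2,
      ((Pu P₁ P₂).image ρ ∘ Fin.castAdd (d₂ + 2)) (Fin.natAdd d₁ j)
        = (![((epath P₁ r₁ w).map (fun t => flagv P₁ t.2.2)).sum,
            ((epath P₁ r₁ w).map (fun t => flagv P₁ t.1)).sum] : Fin 2 → ℕ) j := by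
    intro j
    rw [hxl, hsv, Fin.append_right]
  obtain ⟨hch, hhd, hcl⟩ := epath_struct P₁ r₁ w
  have htel := telescope P₁ (epath P₁ r₁ w) P₁.init.castSucc hch hhd
  rw [hcl] at htel
  have h1 : flagv P₁ (st P₁ r₁ w) = 1 := by
    rw [hstw, flagv_castSucc, if_pos hacc.2.1]
  rw [h1] at htel
  refine Or.inl ⟨⟨hC1, ?_⟩, trivial⟩
  show (((Pu P₁ P₂).image ρ ∘ Fin.castAdd (d₂ + 2)) ∘ Fin.natAdd d₁) 0 + _
      = (((Pu P₁ P₂).image ρ ∘ Fin.castAdd (d₂ + 2)) ∘ Fin.natAdd d₁) 1 + 1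
  show ((Pu P₁ P₂).image ρ ∘ Fin.castAdd (d₂ + 2)) (Fin.natAdd d₁ 0) + _
      = ((Pu P₁ P₂).image ρ ∘ Fin.castAdd (d₂ + 2)) (Fin.natAdd d₁ 1) + 1
  rw [hval 0, hval 1]
  simpa using htel

lemma resolve_right (w : List A) (hacc : P₂.Accepting (P₂.iterRes r₂ w))
    (hword : P₂.word (P₂.iterRes r₂ w) = w) :
    (Pu P₁ P₂).Accepting ((Pu P₁ P₂).iterRes (R2 P₁ P₂ r₁ r₂) w) := by
  have hlet : ∀ a ∈ w, a ∈ SL P₁ P₂ := by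
    intro a haw
    rw [← hword] at haw
    obtain ⟨t, ht, rfl⟩ := List.mem_map.mp haw
    exact Or.inr ⟨t, hacc.1.1 t ht, rfl⟩
  obtain ⟨hrun, hlast⟩ := master P₁ P₂ r₁ r₂ w hlet
  refine ⟨hrun, trivial, ?_⟩
  obtain ⟨hmapmap, hstw⟩ := follow P₂ r₂ w hacc.1 hword w (List.prefix_refl w)
  have hz : (Pu P₁ P₂).iterRes (R2 P₁ P₂ r₁ r₂) w
      = List.zipWith (mk2 P₁ P₂) (epath P₁ r₁ w) (epath P₂ r₂ w) :=
    iterR_zip P₁ P₂ r₁ r₂ w []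
  set ρ := (Pu P₁ P₂).iterRes (R2 P₁ P₂ r₁ r₂) w with hρdef
  have hρ2 : ρ.map (proj2 P₁ P₂) = epath P₂ r₂ w := by
    rw [hz]
    exact map_proj2_zip P₁ P₂ _ _ (by rw [epath_letters, epath_letters])
  have himg : (Pu P₁ P₂).image ρ
      = Fin.append (((ρ.map (proj1 P₁ P₂)).map (tv P₁)).sum)
          (((ρ.map (proj2 P₁ P₂)).map (tv P₂)).sum) := image_decomp P₁ P₂ ρ hrun.1
  rw [hρ2] at himg
  have hxl : (Pu P₁ P₂).image ρ ∘ Fin.natAdd (d₁ + 2)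
      = ((epath P₂ r₂ w).map (tv P₂)).sum := by
    funext i
    show (Pu P₁ P₂).image ρ (Fin.natAdd (d₁ + 2) i) = _
    rw [himg, Fin.append_right]
  have hsv := sum_tv P₂ (epath P₂ r₂ w)
  have hveceq : ((epath P₂ r₂ w).map (fun t => t.2.1.2)).sum
      = P₂.image (P₂.iterRes r₂ w) := by
    rw [hmapmap, List.map_map]
    rfl
  have hC2 : ((Pu P₁ P₂).image ρ ∘ Fin.natAdd (d₁ + 2)) ∘ Fin.castAdd 2 ∈ P₂.C := by
    have heq : ((Pu P₁ P₂).image ρ ∘ Fin.natAdd (d₁ + 2)) ∘ Fin.castAdd 2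
        = P₂.image (P₂.iterRes r₂ w) := by
      funext i
      show ((Pu P₁ P₂).image ρ ∘ Fin.natAdd (d₁ + 2)) (Fin.castAdd 2 i) = _
      rw [hxl, hsv, Fin.append_left, hveceq]
    rw [heq]
    exact hacc.2.2
  have hval : ∀ j : Fin 2,
      ((Pu P₁ P₂).image ρ ∘ Fin.natAdd (d₁ + 2)) (Fin.natAdd d₂ j)
        = (![((epath P₂ r₂ w).map (fun t => flagv P₂ t.2.2)).sum,
            ((epath P₂ r₂ w).map (fun t => flagv P₂ t.1)).sum] : Fin 2 → ℕ) j := by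
    intro j
    rw [hxl, hsv, Fin.append_right]
  obtain ⟨hch, hhd, hcl⟩ := epath_struct P₂ r₂ w
  have htel := telescope P₂ (epath P₂ r₂ w) P₂.init.castSucc hch hhd
  rw [hcl] at htel
  have h1 : flagv P₂ (st P₂ r₂ w) = 1 := by
    rw [hstw, flagv_castSucc, if_pos hacc.2.1]
  rw [h1] at htel
  refine Or.inr ⟨trivial, hC2, ?_⟩
  show (((Pu P₁ P₂).image ρ ∘ Fin.natAdd (d₁ + 2)) ∘ Fin.natAdd d₂) 0 + _
      = (((Pu P₁ P₂).image ρ ∘ Fin.natAdd (d₁ + 2)) ∘ Fin.natAdd d₂) 1 + 1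
  show ((Pu P₁ P₂).image ρ ∘ Fin.natAdd (d₁ + 2)) (Fin.natAdd d₂ 0) + _
      = ((Pu P₁ P₂).image ρ ∘ Fin.natAdd (d₁ + 2)) (Fin.natAdd d₂ 1) + 1
  rw [hval 0, hval 1]
  simpa using htel

end Product3


section Product4

variable {A : Type} {d₁ d₂ : ℕ}

noncomputable def qOf {d : ℕ} (P : PA A d) (q : Fin (P.n + 1)) : Fin P.n :=
  if h : q = Fin.last P.n then P.init else q.castPred h

lemma qOf_castSucc {d : ℕ} (P : PA A d) (q : Fin P.n) : qOf P q.castSucc = q := by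
  unfold qOf
  rw [dif_neg (Fin.castSucc_lt_last q).ne]
  exact Fin.castPred_castSucc _

noncomputable def unlift {d : ℕ} (P : PA A d) (y : CT P) : P.Tr :=
  (qOf P y.1, y.2.1, qOf P y.2.2)

lemma unlift_lift {d : ℕ} (P : PA A d) (t : P.Tr) : unlift P (lift P t) = t := by
  unfold unlift lift
  rw [qOf_castSucc, qOf_castSucc]

lemma extract {d : ℕ} (P : PA A d) (S : Set A) (L : List (CT P))
    (hET : ∀ t ∈ L, t ∈ ET P S)
    (hch : L.Chain' (fun t t' => t.2.2 = t'.1))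
    (hhd : ∀ u, L.head? = some u → u.1 = P.init.castSucc)
    (hflag : (L.map (fun t => flagv P t.2.2)).sum + flagv P P.init.castSucc
        = (L.map (fun t => flagv P t.1)).sum + 1) :
    ∃ ρ : List P.Tr, P.IsRun ρ ∧ P.lastState ρ ∈ P.final ∧
      (ρ.map (fun t => t.2.1.2)).sum = (L.map (fun t => t.2.1.2)).sum ∧
      ρ.map (fun t => t.2.1.1) = L.map (fun t => t.2.1.1) := by
  have htel := telescope P L P.init.castSucc hch hhd
  have hle := flagv_le_one P ((L.getLast?).elim P.init.castSucc (fun t => t.2.2))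
  have hone : flagv P ((L.getLast?).elim P.init.castSucc (fun t => t.2.2)) = 1 := by omega
  have hEF := (flagv_eq_one_iff P _).mp hone
  obtain ⟨qf, hqf, hqeq⟩ := hEF
  have hne : ((L.getLast?).elim P.init.castSucc (fun t => t.2.2)) ≠ Fin.last P.n := by
    rw [← hqeq]
    exact (Fin.castSucc_lt_last qf).ne
  have hreal := all_real P S L P.init.castSucc hET hch hne
  refine ⟨L.map (unlift P), ⟨?_, ?_, ?_⟩, ?_, ?_, ?_⟩
  · intro t' ht'
    obtain ⟨y, hyL, rfl⟩ := List.mem_map.mp ht'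
    obtain ⟨t₀, ht₀, rfl⟩ := hreal y hyL
    rw [unlift_lift]
    exact ht₀
  · unfold List.Chain'; rw [List.isChain_map]
    exact hch.imp (fun a b h => by show qOf P _ = qOf P _; rw [h])
  · intro t' ht'
    rw [List.head?_map] at ht'
    rcases hh : L.head? with _ | y
    · rw [hh] at ht'; cases ht'
    · rw [hh] at ht'
      simp only [Option.map_some, Option.some.injEq] at ht'
      subst ht'
      show qOf P y.1 = P.init
      rw [hhd y hh, qOf_castSucc]
  · unfold PA.lastState
    rw [List.getLast?_map]
    rcases hgl : L.getLast? with _ | y <;> rw [hgl] at hqeq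
    · simp only [Option.elim_none] at hqeq
      simp only [Option.map_none, Option.elim_none]
      have hq : qf = P.init := Fin.castSucc_injective _ hqeq
      rw [← hq]
      exact hqf
    · simp only [Option.elim_some] at hqeq
      simp only [Option.map_some, Option.elim_some]
      show qOf P y.2.2 ∈ P.final
      rw [← hqeq, qOf_castSucc]
      exact hqf
  · rw [List.map_map]
    rfl
  · rw [List.map_map]
    rfl

variable (P₁ : PA A d₁) (P₂ : PA A d₂)

lemma lang_sub (w : List A) (hw : w ∈ (Pu P₁ P₂).Lang) : w ∈ P₁.Lang ∪ P₂.Lang := by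
  obtain ⟨ρ, ⟨⟨hT, hC, hH⟩, -, hCmem⟩, hword⟩ := hw
  have himg : (Pu P₁ P₂).image ρ
      = Fin.append (((ρ.map (proj1 P₁ P₂)).map (tv P₁)).sum)
          (((ρ.map (proj2 P₁ P₂)).map (tv P₂)).sum) := image_decomp P₁ P₂ ρ hT
  -- component 1 facts
  have hET1 : ∀ s ∈ ρ.map (proj1 P₁ P₂), s ∈ ET P₁ (SL P₁ P₂) := by
    intro s hs
    obtain ⟨t, ht, rfl⟩ := List.mem_map.mp hs
    obtain ⟨y, hy, z, hz, hl, rfl⟩ := hT t ht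
    rw [proj1_mk2]
    exact hy
  have hET2 : ∀ s ∈ ρ.map (proj2 P₁ P₂), s ∈ ET P₂ (SL P₁ P₂) := by
    intro s hs
    obtain ⟨t, ht, rfl⟩ := List.mem_map.mp hs
    obtain ⟨y, hy, z, hz, hl, rfl⟩ := hT t ht
    rw [proj2_mk2 P₁ P₂ y z hl]
    exact hz
  have hch1 : (ρ.map (proj1 P₁ P₂)).Chain' (fun t t' => t.2.2 = t'.1) := by
    unfold List.Chain'; erw [List.isChain_map]
    exact hC.imp (fun a b h => by
      show (finProdFinEquiv.symm _).1 = (finProdFinEquiv.symm _).1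
      rw [h])
  have hch2 : (ρ.map (proj2 P₁ P₂)).Chain' (fun t t' => t.2.2 = t'.1) := by
    unfold List.Chain'; erw [List.isChain_map]
    exact hC.imp (fun a b h => by
      show (finProdFinEquiv.symm _).2 = (finProdFinEquiv.symm _).2
      rw [h])
  have hhd1 : ∀ u, (ρ.map (proj1 P₁ P₂)).head? = some u → u.1 = P₁.init.castSucc := by
    intro u hu
    erw [List.head?_map] at hu
    rcases hh : ρ.head? with _ | t
    · erw [hh] at hu; cases hu
    · erw [hh] at hu
      replace hu := Option.some.inj hu
      subst hu
      show (finProdFinEquiv.symm t.1).1 = P₁.init.castSucc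
      rw [hH t hh]
      show (finProdFinEquiv.symm (finProdFinEquiv (P₁.init.castSucc, P₂.init.castSucc))).1 = _
      rw [Equiv.symm_apply_apply]
  have hhd2 : ∀ u, (ρ.map (proj2 P₁ P₂)).head? = some u → u.1 = P₂.init.castSucc := by
    intro u hu
    erw [List.head?_map] at hu
    rcases hh : ρ.head? with _ | t
    · erw [hh] at hu; cases hu
    · erw [hh] at hu
      replace hu := Option.some.inj hu
      subst hu
      show (finProdFinEquiv.symm t.1).2 = P₂.init.castSucc
      rw [hH t hh]
      show (finProdFinEquiv.symm (finProdFinEquiv (P₁.init.castSucc, P₂.init.castSucc))).2 = _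
      rw [Equiv.symm_apply_apply]
  rcases hCmem with hA | hB
  · -- word is accepted by P₁
    obtain ⟨⟨hc1, hf1⟩, -⟩ := hA
    have hxl : (Pu P₁ P₂).image ρ ∘ Fin.castAdd (d₂ + 2)
        = ((ρ.map (proj1 P₁ P₂)).map (tv P₁)).sum := by
      funext i
      show (Pu P₁ P₂).image ρ (Fin.castAdd (d₂ + 2) i) = _
      rw [himg, Fin.append_left]
    have hsv := sum_tv P₁ (ρ.map (proj1 P₁ P₂))
    have hflag : ((ρ.map (proj1 P₁ P₂)).map (fun t => flagv P₁ t.2.2)).sum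
          + flagv P₁ P₁.init.castSucc
        = ((ρ.map (proj1 P₁ P₂)).map (fun t => flagv P₁ t.1)).sum + 1 := by
      have hmem := hf1
      simp only [flagSet, Set.mem_setOf_eq, Function.comp_apply] at hmem
      have h0 := congrFun hxl (Fin.natAdd d₁ 0)
      have h1 := congrFun hxl (Fin.natAdd d₁ 1)
      simp only [Function.comp_apply] at h0 h1
      rw [hsv, Fin.append_right] at h0 h1
      simp only [Matrix.cons_val_zero, Matrix.cons_val_one, Matrix.head_cons] at h0 h1
      rw [h0, h1] at hmem
      exact hmem
    obtain ⟨ρ₁, hrun₁, hfin₁, hsum₁, hlet₁⟩ :=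
      extract P₁ (SL P₁ P₂) (ρ.map (proj1 P₁ P₂)) hET1 hch1 hhd1 hflag
    refine Or.inl ⟨ρ₁, ⟨hrun₁, hfin₁, ?_⟩, ?_⟩
    · have heq : P₁.image ρ₁
          = ((Pu P₁ P₂).image ρ ∘ Fin.castAdd (d₂ + 2)) ∘ Fin.castAdd 2 := by
        show (ρ₁.map (fun t => t.2.1.2)).sum = _
        rw [hsum₁]
        funext i
        show _ = ((Pu P₁ P₂).image ρ ∘ Fin.castAdd (d₂ + 2)) (Fin.castAdd 2 i)
        rw [hxl, hsv, Fin.append_left]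
      rw [heq]
      exact hc1
    · show ρ₁.map (fun t => t.2.1.1) = w
      erw [hlet₁, List.map_map]
      rw [← hword]
      rfl
  · -- word is accepted by P₂
    obtain ⟨-, hc2, hf2⟩ := hB
    have hxl : (Pu P₁ P₂).image ρ ∘ Fin.natAdd (d₁ + 2)
        = ((ρ.map (proj2 P₁ P₂)).map (tv P₂)).sum := by
      funext i
      show (Pu P₁ P₂).image ρ (Fin.natAdd (d₁ + 2) i) = _
      rw [himg, Fin.append_right]
    have hsv := sum_tv P₂ (ρ.map (proj2 P₁ P₂))
    have hflag : ((ρ.map (proj2 P₁ P₂)).map (fun t => flagv P₂ t.2.2)).sum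
          + flagv P₂ P₂.init.castSucc
        = ((ρ.map (proj2 P₁ P₂)).map (fun t => flagv P₂ t.1)).sum + 1 := by
      have hmem := hf2
      simp only [flagSet, Set.mem_setOf_eq, Function.comp_apply] at hmem
      have h0 := congrFun hxl (Fin.natAdd d₂ 0)
      have h1 := congrFun hxl (Fin.natAdd d₂ 1)
      simp only [Function.comp_apply] at h0 h1
      rw [hsv, Fin.append_right] at h0 h1
      simp only [Matrix.cons_val_zero, Matrix.cons_val_one, Matrix.head_cons] at h0 h1
      rw [h0, h1] at hmem
      exact hmem
    obtain ⟨ρ₂, hrun₂, hfin₂, hsum₂, hlet₂⟩ :=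
      extract P₂ (SL P₁ P₂) (ρ.map (proj2 P₁ P₂)) hET2 hch2 hhd2 hflag
    refine Or.inr ⟨ρ₂, ⟨hrun₂, hfin₂, ?_⟩, ?_⟩
    · have heq : P₂.image ρ₂
          = ((Pu P₁ P₂).image ρ ∘ Fin.natAdd (d₁ + 2)) ∘ Fin.castAdd 2 := by
        show (ρ₂.map (fun t => t.2.1.2)).sum = _
        rw [hsum₂]
        funext i
        show _ = ((Pu P₁ P₂).image ρ ∘ Fin.natAdd (d₁ + 2)) (Fin.castAdd 2 i)
        rw [hxl, hsv, Fin.append_left]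
      rw [heq]
      exact hc2
    · show ρ₂.map (fun t => t.2.1.1) = w
      erw [hlet₂, List.map_map]
      rw [← hword]
      rfl

end Product4

end HDPA

/-- History-deterministic Parikh automata are closed under union. -/
theorem hdpa_closed_union {A : Type} {d₁ d₂ : ℕ} (P₁ : PA A d₁) (P₂ : PA A d₂)
    (h₁ : P₁.HistoryDeterministic) (h₂ : P₂.HistoryDeterministic) :
    ∃ (d : ℕ) (P : PA A d), P.HistoryDeterministic ∧ P.Lang = P₁.Lang ∪ P₂.Lang := by
  obtain ⟨r₁, hr₁⟩ := h₁
  obtain ⟨r₂, hr₂⟩ := h₂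
  refine ⟨(d₁ + 2) + (d₂ + 2), HDPA.Pu P₁ P₂, ?_, ?_⟩
  · refine ⟨HDPA.R2 P₁ P₂ r₁ r₂, ?_⟩
    intro w hw
    rcases HDPA.lang_sub P₁ P₂ w hw with h | h
    · obtain ⟨hacc, hword⟩ := hr₁ w h
      exact ⟨HDPA.resolve_left P₁ P₂ r₁ r₂ w hacc hword, HDPA.word_R2 P₁ P₂ r₁ r₂ w⟩
    · obtain ⟨hacc, hword⟩ := hr₂ w h
      exact ⟨HDPA.resolve_right P₁ P₂ r₁ r₂ w hacc hword, HDPA.word_R2 P₁ P₂ r₁ r₂ w⟩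
  · ext w
    constructor
    · exact HDPA.lang_sub P₁ P₂ w
    · intro hw
      rcases hw with h | h
      · obtain ⟨hacc, hword⟩ := hr₁ w h
        exact ⟨_, HDPA.resolve_left P₁ P₂ r₁ r₂ w hacc hword, HDPA.word_R2 P₁ P₂ r₁ r₂ w⟩
      · obtain ⟨hacc, hword⟩ := hr₂ w h
        exact ⟨_, HDPA.resolve_right P₁ P₂ r₁ r₂ w hacc hword, HDPA.word_R2 P₁ P₂ r₁ r₂ w⟩
end

section
/- History-deterministic Parikh automata are not closed under complement: there exists a language accepted by an HDPA whose complement is not accepted by any Parikh automaton (hence by no HDPA). -/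
open scoped BigOperators

/-! ### Auxiliary theory of runs -/

namespace HDPAwork

open PA List

variable {A : Type} {d : ℕ}

/-- `RunFrom P ρ q q'`: `ρ` is a valid sequence of transitions leading from `q` to `q'`. -/
def RunFrom (P : PA A d) : List P.Tr → Fin P.n → Fin P.n → Prop
  | [], q, q' => q = q'
  | t :: ρ, q, q' => t.1 = q ∧ t ∈ P.trans ∧ RunFrom P ρ t.2.2 q'

/-- Last state of a run started at `q`. -/
def lastFrom (P : PA A d) (ρ : List P.Tr) (q : Fin P.n) : Fin P.n :=
  (ρ.getLast?).elim q (fun t => t.2.2)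

lemma lastState_eq_lastFrom (P : PA A d) (ρ : List P.Tr) :
    P.lastState ρ = lastFrom P ρ P.init := rfl

@[simp] lemma lastFrom_nil (P : PA A d) (q : Fin P.n) : lastFrom P [] q = q := rfl

lemma lastFrom_cons (P : PA A d) (t : P.Tr) (ρ : List P.Tr) (q : Fin P.n) :
    lastFrom P (t :: ρ) q = lastFrom P ρ t.2.2 := by
  induction ρ generalizing t q with
  | nil => rfl
  | cons h l ih =>
    show ((t :: h :: l).getLast?).elim q _ = _
    rw [List.getLast?_cons_cons]
    exact (ih h q).trans (ih h t.2.2).symm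

lemma runFrom_append {P : PA A d} {ρ₁ ρ₂ : List P.Tr} {q q'' : Fin P.n} :
    RunFrom P (ρ₁ ++ ρ₂) q q'' ↔ ∃ q', RunFrom P ρ₁ q q' ∧ RunFrom P ρ₂ q' q'' := by
  induction ρ₁ generalizing q with
  | nil => simp [RunFrom]
  | cons t ρ ih => simp [RunFrom, ih, and_assoc]

lemma runFrom_last {P : PA A d} {ρ : List P.Tr} {q q' : Fin P.n}
    (h : RunFrom P ρ q q') : lastFrom P ρ q = q' := by
  induction ρ generalizing q with
  | nil => exact h
  | cons t ρ ih => rw [lastFrom_cons]; exact ih h.2.2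

lemma runFrom_iff (P : PA A d) : ∀ (ρ : List P.Tr) (q : Fin P.n),
    RunFrom P ρ q (lastFrom P ρ q) ↔
      ((∀ t ∈ ρ, t ∈ P.trans) ∧ ρ.Chain' (fun t t' => t.2.2 = t'.1) ∧
        (∀ t, ρ.head? = some t → t.1 = q)) := by
  intro ρ
  induction ρ with
  | nil => intro q; simp [RunFrom, lastFrom, List.Chain', List.isChain_nil]
  | cons t l ih =>
    intro q
    rw [lastFrom_cons]
    show (t.1 = q ∧ t ∈ P.trans ∧ RunFrom P l t.2.2 (lastFrom P l t.2.2)) ↔ _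
    constructor
    · rintro ⟨h1, h2, h3⟩
      obtain ⟨ha, hb, hc⟩ := (ih t.2.2).1 h3
      refine ⟨?_, ?_, ?_⟩
      · intro s hs
        rcases List.mem_cons.1 hs with rfl | hs
        · exact h2
        · exact ha _ hs
      · show List.IsChain _ _
        rw [List.isChain_cons]
        exact ⟨fun y hy => (hc y (Option.mem_def.1 hy)).symm, hb⟩
      · intro s hs
        rw [List.head?_cons, Option.some.injEq] at hs
        subst hs; exact h1
    · rintro ⟨h1, h2, h3⟩
      change List.IsChain _ _ at h2
      rw [List.isChain_cons] at h2
      refine ⟨h3 t rfl, h1 t (List.mem_cons_self (a := t) (l := l)), (ih t.2.2).2 ⟨?_, h2.2, ?_⟩⟩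
      · intro s hs; exact h1 s (List.mem_cons_of_mem _ hs)
      · intro s hs
        exact (h2.1 s (Option.mem_def.2 hs)).symm

lemma isRun_iff {P : PA A d} {ρ : List P.Tr} :
    P.IsRun ρ ↔ RunFrom P ρ P.init (P.lastState ρ) := by
  rw [lastState_eq_lastFrom, runFrom_iff]; rfl

lemma isRun_of_runFrom {P : PA A d} {ρ : List P.Tr} {q : Fin P.n}
    (h : RunFrom P ρ P.init q) : P.IsRun ρ ∧ P.lastState ρ = q := by
  have hl := runFrom_last h
  rw [← lastState_eq_lastFrom] at hl
  subst hl
  exact ⟨isRun_iff.2 h, rfl⟩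

lemma image_append (P : PA A d) (ρ₁ ρ₂ : List P.Tr) :
    P.image (ρ₁ ++ ρ₂) = P.image ρ₁ + P.image ρ₂ := by
  simp [PA.image]

lemma word_append (P : PA A d) (ρ₁ ρ₂ : List P.Tr) :
    P.word (ρ₁ ++ ρ₂) = P.word ρ₁ ++ P.word ρ₂ := by
  simp [PA.word]

lemma word_take (P : PA A d) (ρ : List P.Tr) (m : ℕ) :
    P.word (ρ.take m) = (P.word ρ).take m := by
  simp [PA.word, List.map_take]

lemma word_drop (P : PA A d) (ρ : List P.Tr) (m : ℕ) :
    P.word (ρ.drop m) = (P.word ρ).drop m := by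
  simp [PA.word, List.map_drop]

/-- Key surgery: in an accepting run whose word splits as `x₁ x₂ x₃ x₄` such that the
states after `x₁`, after `x₁x₂` and after `x₁x₂x₃` coincide, the two middle loops can be
exchanged, yielding acceptance of `x₁ x₃ x₂ x₄`. -/
lemma accept_swap {A : Type} {d' : ℕ} (P' : PA A d') {ρ : List P'.Tr}
    (hacc : P'.Accepting ρ) (x₁ x₂ x₃ x₄ : List A)
    (hw : P'.word ρ = x₁ ++ (x₂ ++ (x₃ ++ x₄)))
    (h12 : P'.lastState (ρ.take x₁.length) =
      P'.lastState (ρ.take (x₁.length + x₂.length)))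
    (h13 : P'.lastState (ρ.take x₁.length) =
      P'.lastState (ρ.take (x₁.length + x₂.length + x₃.length))) :
    x₁ ++ (x₃ ++ (x₂ ++ x₄)) ∈ P'.Lang := by
  have hsplit : ρ = ρ.take x₁.length ++ ((ρ.drop x₁.length).take x₂.length ++
      (((ρ.drop x₁.length).drop x₂.length).take x₃.length ++
        ((ρ.drop x₁.length).drop x₂.length).drop x₃.length)) := by
    rw [List.take_append_drop, List.take_append_drop, List.take_append_drop]
  have hw1 : P'.word (ρ.take x₁.length) = x₁ := by
    rw [word_take, hw, List.take_left]
  have hd1 : P'.word (ρ.drop x₁.length) = x₂ ++ (x₃ ++ x₄) := by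
    rw [word_drop, hw, List.drop_left]
  have hw2 : P'.word ((ρ.drop x₁.length).take x₂.length) = x₂ := by
    rw [word_take, hd1, List.take_left]
  have hd2 : P'.word ((ρ.drop x₁.length).drop x₂.length) = x₃ ++ x₄ := by
    rw [word_drop, hd1, List.drop_left]
  have hw3 : P'.word (((ρ.drop x₁.length).drop x₂.length).take x₃.length) = x₃ := by
    rw [word_take, hd2, List.take_left]
  have hw4 : P'.word (((ρ.drop x₁.length).drop x₂.length).drop x₃.length) = x₄ := by
    rw [word_drop, hd2, List.drop_left]
  have hrun : RunFrom P' (ρ.take x₁.length ++ ((ρ.drop x₁.length).take x₂.length ++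
      (((ρ.drop x₁.length).drop x₂.length).take x₃.length ++
        ((ρ.drop x₁.length).drop x₂.length).drop x₃.length))) P'.init (P'.lastState ρ) := by
    rw [← hsplit]; exact isRun_iff.1 hacc.1
  obtain ⟨s₁, hA, hrest⟩ := runFrom_append.1 hrun
  obtain ⟨s₂, hB, hrest'⟩ := runFrom_append.1 hrest
  obtain ⟨s₃, hC3, hD⟩ := runFrom_append.1 hrest'
  -- identify the intermediate states
  have hs₁ : P'.lastState (ρ.take x₁.length) = s₁ := by
    rw [lastState_eq_lastFrom]; exact runFrom_last hA
  have hs₂ : P'.lastState (ρ.take (x₁.length + x₂.length)) = s₂ := by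
    rw [lastState_eq_lastFrom, List.take_add]
    exact runFrom_last (runFrom_append.2 ⟨s₁, hA, hB⟩)
  have hs₃ : P'.lastState (ρ.take (x₁.length + x₂.length + x₃.length)) = s₃ := by
    rw [lastState_eq_lastFrom, Nat.add_assoc, List.take_add, List.take_add]
    exact runFrom_last (runFrom_append.2 ⟨s₁, hA, runFrom_append.2 ⟨s₂, hB, hC3⟩⟩)
  have e2 : s₂ = s₁ := by rw [← hs₂, ← hs₁, ← h12]
  have e3 : s₃ = s₁ := by rw [← hs₃, ← hs₁, ← h13]
  rw [e2, e3] at hC3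
  rw [e2] at hB
  rw [e3] at hD
  -- the rearranged run
  have hrun' : RunFrom P' (ρ.take x₁.length ++
      ((((ρ.drop x₁.length).drop x₂.length).take x₃.length) ++
        (((ρ.drop x₁.length).take x₂.length) ++
          ((ρ.drop x₁.length).drop x₂.length).drop x₃.length))) P'.init (P'.lastState ρ) :=
    runFrom_append.2 ⟨s₁, hA, runFrom_append.2 ⟨s₁, hC3,
      runFrom_append.2 ⟨s₁, hB, hD⟩⟩⟩
  obtain ⟨hisrun, hlast⟩ := isRun_of_runFrom hrun'
  refine ⟨_, ⟨hisrun, ?_, ?_⟩, ?_⟩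
  · rw [hlast]; exact hacc.2.1
  · have himg : P'.image (ρ.take x₁.length ++
        ((((ρ.drop x₁.length).drop x₂.length).take x₃.length) ++
          (((ρ.drop x₁.length).take x₂.length) ++
            ((ρ.drop x₁.length).drop x₂.length).drop x₃.length))) = P'.image ρ := by
      conv_rhs => rw [hsplit]
      simp only [image_append]
      abel
    rw [himg]; exact hacc.2.2
  · rw [word_append, word_append, word_append, hw1, hw2, hw3, hw4]

/-! ### The language `N` and block words -/
/-- `N`: words having a prefix with strictly more `true`s (1s) than `false`s (0s). -/
def N : Set (List Bool) := {w | ∃ u, u <+: w ∧ u.count false < u.count true}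

lemma nil_not_mem_N : [] ∉ N := by
  rintro ⟨u, hu, hc⟩
  rw [List.prefix_nil] at hu
  subst hu; simp at hc

lemma mem_N_mono {w w' : List Bool} (h : w <+: w') (hw : w ∈ N) : w' ∈ N := by
  obtain ⟨u, hu, hc⟩ := hw
  exact ⟨u, hu.trans h, hc⟩

lemma count_le_of_not_mem_N {w : List Bool} (h : w ∉ N) :
    w.count true ≤ w.count false := by
  by_contra hc
  exact h ⟨w, List.prefix_refl w, by omega⟩

lemma prefix_append_cases {α : Type*} {u x y : List α} (h : u <+: x ++ y) :
    u <+: x ∨ ∃ v, v <+: y ∧ u = x ++ v := by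
  obtain ⟨w, hw⟩ := h
  rw [List.append_eq_append_iff] at hw
  rcases hw with ⟨a', ha', _⟩ | ⟨c', hc', hd'⟩
  · left; exact ⟨a', ha'.symm⟩
  · right; exact ⟨c', ⟨w, hd'.symm⟩, hc'⟩

lemma prefix_replicate {α : Type*} {u : List α} {m : ℕ} {a : α}
    (h : u <+: List.replicate m a) : u = List.replicate u.length a := by
  have := List.prefix_iff_eq_take.1 h
  rw [List.take_replicate] at this
  have hl : u.length ≤ m := by
    simpa using h.length_le
  rwa [min_eq_left hl] at this

/-- blocks -/
def Fb (t : ℕ) : List Bool := List.replicate (t + 1) false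
def Gb (t : ℕ) : List Bool := List.replicate (t + 1) true
def blk (t : ℕ) : List Bool := Fb t ++ Gb t
def J (a n : ℕ) : List Bool := ((List.range' a n).map blk).flatten

@[simp] lemma count_false_Fb (t : ℕ) : (Fb t).count false = t + 1 := by
  simp [Fb, List.count_replicate]
@[simp] lemma count_true_Fb (t : ℕ) : (Fb t).count true = 0 := by
  simp [Fb, List.count_replicate]
@[simp] lemma count_false_Gb (t : ℕ) : (Gb t).count false = 0 := by
  simp [Gb, List.count_replicate]
@[simp] lemma count_true_Gb (t : ℕ) : (Gb t).count true = t + 1 := by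
  simp [Gb, List.count_replicate]

@[simp] lemma J_zero (a : ℕ) : J a 0 = [] := rfl

lemma J_succ (a n : ℕ) : J a (n + 1) = blk a ++ J (a + 1) n := by
  simp [J, List.range'_succ]

lemma J_one (a : ℕ) : J a 1 = blk a := by
  simp [J_succ]

lemma J_append (m : ℕ) : ∀ (a n : ℕ), J a m ++ J (a + m) n = J a (m + n) := by
  induction m with
  | zero => intro a n; simp
  | succ m ih =>
    intro a n
    rw [J_succ, List.append_assoc]
    have : a + (m + 1) = (a + 1) + m := by omega
    rw [this, ih (a + 1) n, ← J_succ]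
    congr 1
    omega

lemma J_bal : ∀ (n a : ℕ), (J a n).count true = (J a n).count false := by
  intro n
  induction n with
  | zero => intro a; simp
  | succ n ih =>
    intro a
    rw [J_succ]
    simp [List.count_append, blk, ih (a + 1)]

lemma blk_prefix_le {t : ℕ} {u : List Bool} (h : u <+: blk t) :
    u.count true ≤ u.count false := by
  rcases prefix_append_cases h with h1 | ⟨v, hv, rfl⟩
  · rw [prefix_replicate h1]
    simp [List.count_replicate]
  · have hv' := prefix_replicate hv
    have hl : v.length ≤ t + 1 := by simpa [Gb] using hv.length_le
    rw [hv']
    simp [List.count_append, List.count_replicate]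
    omega

lemma J_prefix_le : ∀ (n a : ℕ) (u : List Bool), u <+: J a n →
    u.count true ≤ u.count false := by
  intro n
  induction n with
  | zero =>
    intro a u hu
    rw [J_zero, List.prefix_nil] at hu
    subst hu; simp
  | succ n ih =>
    intro a u hu
    rw [J_succ] at hu
    rcases prefix_append_cases hu with h1 | ⟨v, hv, rfl⟩
    · exact blk_prefix_le h1
    · have := ih (a + 1) v hv
      simp [List.count_append, blk]
      omega

/-- The block word `J 0 r` avoids `N`. -/
lemma J_not_mem_N (r : ℕ) : J 0 r ∉ N := by
  rintro ⟨u, hu, hc⟩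
  have := J_prefix_le r 0 u hu
  omega

/-- Header of block `t`: blocks `0..t-1` plus the `0`-part of block `t`. -/
def Hdr (t : ℕ) : List Bool := J 0 t ++ Fb t

/-- Segment from the middle of block `i` to the middle of block `j`. -/
def Seg (i j : ℕ) : List Bool := Gb i ++ J (i + 1) (j - i - 1) ++ Fb j

/-- Tail from middle of block `k` to the end. -/
def Tl (k r : ℕ) : List Bool := Gb k ++ J (k + 1) (r - k - 1)

lemma Hdr_Seg {i j : ℕ} (h : i < j) : Hdr i ++ Seg i j = Hdr j := by
  have h1 : i + 1 + (j - i - 1) = j := by omega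
  calc Hdr i ++ Seg i j
      = (J 0 i ++ (Fb i ++ Gb i)) ++ J (i + 1) (j - i - 1) ++ Fb j := by
        simp [Hdr, Seg, List.append_assoc]
    _ = (J 0 i ++ J i 1) ++ J (i + 1) (j - i - 1) ++ Fb j := by rw [J_one]; rfl
    _ = J 0 (i + 1) ++ J (i + 1) (j - i - 1) ++ Fb j := by
        rw [show J 0 i ++ J i 1 = J 0 (i+1) from by simpa using J_append i 0 1]
    _ = J 0 j ++ Fb j := by
        rw [show J 0 (i+1) ++ J (i+1) (j - i - 1) = J 0 j from by
          have := J_append (i+1) 0 (j - i - 1); simpa [h1] using this]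
    _ = Hdr j := rfl

lemma Hdr_Tl {k r : ℕ} (h : k < r) : Hdr k ++ Tl k r = J 0 r := by
  have h1 : k + 1 + (r - k - 1) = r := by omega
  calc Hdr k ++ Tl k r
      = (J 0 k ++ (Fb k ++ Gb k)) ++ J (k + 1) (r - k - 1) := by
        simp [Hdr, Tl, List.append_assoc]
    _ = (J 0 k ++ J k 1) ++ J (k + 1) (r - k - 1) := by rw [J_one]; rfl
    _ = J 0 (k + 1) ++ J (k + 1) (r - k - 1) := by
        rw [show J 0 k ++ J k 1 = J 0 (k+1) from by simpa using J_append k 0 1]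
    _ = J 0 r := by
        have := J_append (k+1) 0 (r - k - 1); simpa [h1] using this

lemma W_decomp {i j k r : ℕ} (hij : i < j) (hjk : j < k) (hkr : k < r) :
    J 0 r = Hdr i ++ (Seg i j ++ (Seg j k ++ Tl k r)) := by
  rw [← Hdr_Tl hkr, ← Hdr_Seg hjk, ← Hdr_Seg hij]
  simp [List.append_assoc]

/-- Extracting three increasing elements from a finset of cardinality > 2. -/
lemma exists_three {s : Finset ℕ} (h : 2 < s.card) :
    ∃ i ∈ s, ∃ j ∈ s, ∃ k ∈ s, i < j ∧ j < k := by
  have h0 : s.Nonempty := Finset.card_pos.1 (by omega)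
  set i := s.min' h0 with hi
  have his : i ∈ s := s.min'_mem h0
  set s2 := s.erase i with hs2
  have hs2card : 1 < s2.card := by
    rw [hs2, Finset.card_erase_of_mem his]; omega
  have h02 : s2.Nonempty := Finset.card_pos.1 (by omega)
  set j := s2.min' h02 with hj
  have hjs2 : j ∈ s2 := s2.min'_mem h02
  set s3 := s2.erase j with hs3
  have hs3card : 0 < s3.card := by
    rw [hs3, Finset.card_erase_of_mem hjs2]; omega
  have h03 : s3.Nonempty := Finset.card_pos.1 hs3card
  set k := s3.min' h03 with hk
  have hks3 : k ∈ s3 := s3.min'_mem h03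
  have hjs : j ∈ s := Finset.mem_of_mem_erase hjs2
  have hks2 : k ∈ s2 := Finset.mem_of_mem_erase hks3
  have hks : k ∈ s := Finset.mem_of_mem_erase hks2
  refine ⟨i, his, j, hjs, k, hks, ?_, ?_⟩
  · have : i ≤ j := s.min'_le j hjs
    have : j ≠ i := Finset.ne_of_mem_erase hjs2
    omega
  · have : j ≤ k := s2.min'_le k hks2
    have : k ≠ j := Finset.ne_of_mem_erase hks3
    omega

/-! ### No PA accepts `Nᶜ` -/

theorem Ncompl_not_PA (d' : ℕ) (P' : PA Bool d') : P'.Lang ≠ Nᶜ := by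
  intro hL
  set r := 2 * P'.n + 1 with hr
  have hWmem : J 0 r ∈ P'.Lang := by
    rw [hL]; exact J_not_mem_N r
  obtain ⟨ρ, hacc, hword⟩ := hWmem
  obtain ⟨y, -, hy⟩ :=
    Finset.exists_lt_card_fiber_of_mul_lt_card_of_maps_to
      (s := Finset.range r) (t := (Finset.univ : Finset (Fin P'.n)))
      (f := fun t => P'.lastState (ρ.take (Hdr t).length)) (n := 2)
      (fun a _ => Finset.mem_univ _) (by simp [hr]; omega)
  obtain ⟨i, hi, j, hj, k, hk, hij, hjk⟩ := exists_three hy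
  have hgi := (Finset.mem_filter.1 hi).2
  have hgj := (Finset.mem_filter.1 hj).2
  have hgk := (Finset.mem_filter.1 hk).2
  have hkr : k < r := Finset.mem_range.1 (Finset.mem_filter.1 hk).1
  have hWd : P'.word ρ = Hdr i ++ (Seg i j ++ (Seg j k ++ Tl k r)) := by
    rw [hword]; exact W_decomp hij hjk hkr
  have hlen2 : (Hdr i).length + (Seg i j).length = (Hdr j).length := by
    rw [← Hdr_Seg hij, List.length_append]
  have hlen3 : (Hdr i).length + (Seg i j).length + (Seg j k).length = (Hdr k).length := by
    rw [← Hdr_Seg hjk, ← Hdr_Seg hij, List.length_append, List.length_append]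
  have hmem' : Hdr i ++ (Seg j k ++ (Seg i j ++ Tl k r)) ∈ P'.Lang := by
    refine accept_swap P' hacc (Hdr i) (Seg i j) (Seg j k) (Tl k r) hWd ?_ ?_
    · rw [hlen2, hgi, hgj]
    · rw [hlen3, hgi, hgk]
  rw [hL] at hmem'
  apply hmem'
  refine ⟨Hdr i ++ Gb j, ⟨(J (j + 1) (k - j - 1) ++ Fb k) ++ (Seg i j ++ Tl k r), ?_⟩, ?_⟩
  · simp [Seg, List.append_assoc]
  · have hbal := J_bal i 0
    simp [Hdr, List.count_append]
    omega

/-! ### The HD Parikh automaton accepting `N` -/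

def e0 : Fin 2 → ℕ := ![1, 0]
def e1 : Fin 2 → ℕ := ![0, 1]

def transList : List (Fin 2 × (Bool × (Fin 2 → ℕ)) × Fin 2) :=
  [(0, (false, e0), 0), (0, (true, e1), 0), (0, (true, e1), 1),
   (1, (false, (0 : Fin 2 → ℕ)), 1), (1, (true, (0 : Fin 2 → ℕ)), 1)]

def Cset : Set (Fin 2 → ℕ) := {x | x 1 = x 0 + 1}

lemma funext2 {f g : Fin 2 → ℕ} (h0 : f 0 = g 0) (h1 : f 1 = g 1) : f = g := by
  funext i
  match i with
  | ⟨0, _⟩ => exact h0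
  | ⟨1, _⟩ => exact h1

lemma Cset_semilinear : IsSemilinear Cset := by
  refine ⟨1, fun _ => Cset, fun _ => ⟨1, ![0, 1], fun _ => ![1, 1], ?_⟩,
    (Set.iUnion_const _).symm⟩
  ext x
  simp only [Cset, Set.mem_setOf_eq, Fin.sum_univ_one]
  constructor
  · intro hx
    refine ⟨fun _ => x 0, funext2 ?_ ?_⟩
    · simp only [Pi.add_apply, Pi.smul_apply, smul_eq_mul, Matrix.cons_val_zero, mul_one]
      omega
    · simp only [Pi.add_apply, Pi.smul_apply, smul_eq_mul, Matrix.cons_val_one,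
        Matrix.head_cons, mul_one, hx, Matrix.cons_val_zero]
      omega
  · rintro ⟨c, rfl⟩
    simp only [Pi.add_apply, Pi.smul_apply, smul_eq_mul, Matrix.cons_val_one,
      Matrix.head_cons, Matrix.cons_val_zero, mul_one]
    omega

abbrev Pex : PA Bool 2 :=
  { n := 2
    init := 0
    final := {1}
    trans := {t | t ∈ transList}
    transFin := transList.finite_toSet
    C := Cset
    hC := Cset_semilinear }

def cnt (u : List Bool) : Fin 2 → ℕ := ![u.count false, u.count true]

lemma image_cons {A : Type} {d : ℕ} (P : PA A d) (t : P.Tr) (l : List P.Tr) :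
    P.image (t :: l) = t.2.1.2 + P.image l := by
  simp [PA.image]

lemma word_cons {A : Type} {d : ℕ} (P : PA A d) (t : P.Tr) (l : List P.Tr) :
    P.word (t :: l) = t.2.1.1 :: P.word l := by
  simp [PA.word]

lemma cnt_nil : cnt [] = 0 := by
  funext i; fin_cases i <;> simp [cnt]

lemma cnt_cons_false (u : List Bool) : cnt (false :: u) = e0 + cnt u := by
  funext i; fin_cases i <;> simp [cnt, e0, List.count_cons] <;> omega

lemma cnt_cons_true (u : List Bool) : cnt (true :: u) = e1 + cnt u := by
  funext i; fin_cases i <;> simp [cnt, e1, List.count_cons] <;> omega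

lemma cnt_single_true : cnt [true] = e1 := by
  funext i; fin_cases i <;> simp [cnt, e1]

/-- Runs from state `1` stay in state `1` and contribute nothing. -/
lemma runB : ∀ (ρ : List Pex.Tr) (q : Fin 2), RunFrom Pex ρ 1 q →
    q = 1 ∧ Pex.image ρ = 0 := by
  intro ρ
  induction ρ with
  | nil =>
    intro q h
    exact ⟨h.symm, by simp [PA.image]⟩
  | cons t l ih =>
    rintro q ⟨h1, h2, h3⟩
    have h2' : t ∈ transList := h2
    simp only [transList, List.mem_cons, List.mem_singleton, List.not_mem_nil,
      or_false] at h2'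
    rcases h2' with rfl | rfl | rfl | rfl | rfl
    · exact absurd h1 (by decide)
    · exact absurd h1 (by decide)
    · exact absurd h1 (by decide)
    · obtain ⟨hq, him⟩ := ih q h3
      exact ⟨hq, by rw [image_cons, him]; simp⟩
    · obtain ⟨hq, him⟩ := ih q h3
      exact ⟨hq, by rw [image_cons, him]; simp⟩

/-- Characterisation of runs from the initial state `0`. -/
lemma runA : ∀ (ρ : List Pex.Tr) (q : Fin 2), RunFrom Pex ρ 0 q →
    (q = 0 ∧ Pex.image ρ = cnt (Pex.word ρ)) ∨
    (q = 1 ∧ ∃ u, u <+: Pex.word ρ ∧ Pex.image ρ = cnt u) := by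
  intro ρ
  induction ρ with
  | nil =>
    intro q h
    left
    exact ⟨h.symm, by simp [PA.word, PA.image, cnt_nil]⟩
  | cons t l ih =>
    rintro q ⟨h1, h2, h3⟩
    have h2' : t ∈ transList := h2
    simp only [transList, List.mem_cons, List.mem_singleton, List.not_mem_nil,
      or_false] at h2'
    rcases h2' with rfl | rfl | rfl | rfl | rfl
    · -- (0, (false, e0), 0)
      rcases ih q h3 with ⟨hq, him⟩ | ⟨hq, u, hu, him⟩
      · left
        refine ⟨hq, ?_⟩
        rw [image_cons, him, word_cons, cnt_cons_false]
      · right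
        refine ⟨hq, false :: u, ?_, ?_⟩
        · rw [word_cons]
          obtain ⟨w, hw⟩ := hu
          exact ⟨w, by rw [List.cons_append, hw]⟩
        · rw [image_cons, him, cnt_cons_false]
    · -- (0, (true, e1), 0)
      rcases ih q h3 with ⟨hq, him⟩ | ⟨hq, u, hu, him⟩
      · left
        refine ⟨hq, ?_⟩
        rw [image_cons, him, word_cons, cnt_cons_true]
      · right
        refine ⟨hq, true :: u, ?_, ?_⟩
        · rw [word_cons]
          obtain ⟨w, hw⟩ := hu
          exact ⟨w, by rw [List.cons_append, hw]⟩
        · rw [image_cons, him, cnt_cons_true]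
    · -- (0, (true, e1), 1): the jump
      obtain ⟨hq, him⟩ := runB l q h3
      right
      refine ⟨hq, [true], ?_, ?_⟩
      · rw [word_cons]; exact ⟨Pex.word l, rfl⟩
      · rw [image_cons, him, cnt_single_true]; simp
    · exact absurd h1 (by decide)
    · exact absurd h1 (by decide)

lemma lang_sub : Pex.Lang ⊆ N := by
  rintro w ⟨ρ, ⟨hrun, hfin, hC⟩, rfl⟩
  have h := isRun_iff.1 hrun
  have hfin' : Pex.lastState ρ = 1 := hfin
  rw [hfin'] at h
  rcases runA ρ 1 h with ⟨h0, -⟩ | ⟨-, u, hu, him⟩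
  · exact absurd h0 (by decide)
  · rw [him] at hC
    have hC' : (cnt u) 1 = (cnt u) 0 + 1 := hC
    simp only [cnt, Matrix.cons_val_one, Matrix.head_cons, Matrix.cons_val_zero] at hC'
    exact ⟨u, hu, by omega⟩

open Classical in
/-- The resolver: jump from `0` to `1` exactly when the current letter produces the first
prefix with more 1s than 0s. -/
noncomputable def res : List Bool → Bool → Pex.Tr := fun pre a =>
  if pre ∈ N then (1, (a, (0 : Fin 2 → ℕ)), 1)
  else if a = true ∧ pre.count true = pre.count false then (0, (true, e1), 1)
  else (0, (a, if a then e1 else e0), 0)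

lemma resB : ∀ (rest pre : List Bool), pre ∈ N →
    RunFrom Pex (Pex.iterResAux res pre rest) 1 1 ∧
    Pex.image (Pex.iterResAux res pre rest) = 0 ∧
    Pex.word (Pex.iterResAux res pre rest) = rest := by
  intro rest
  induction rest with
  | nil =>
    intro pre h
    exact ⟨rfl, by simp [PA.iterResAux, PA.image], by simp [PA.iterResAux, PA.word]⟩
  | cons a rest ih =>
    intro pre h
    have hres : res pre a = (1, (a, (0 : Fin 2 → ℕ)), 1) := by
      simp only [res]; rw [if_pos h]
    obtain ⟨h1, h2, h3⟩ := ih (pre ++ [a]) (mem_N_mono (List.prefix_append pre [a]) h)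
    simp only [PA.iterResAux, hres]
    refine ⟨⟨rfl, ?_, h1⟩, ?_, ?_⟩
    · show (1, (a, (0 : Fin 2 → ℕ)), 1) ∈ transList
      cases a <;> simp [transList]
    · rw [image_cons, h2]; simp
    · rw [word_cons, h3]

lemma resA : ∀ (rest pre : List Bool), pre ∉ N →
    Pex.word (Pex.iterResAux res pre rest) = rest ∧
    ((pre ++ rest) ∈ N →
      ∃ u, u <+: rest ∧ RunFrom Pex (Pex.iterResAux res pre rest) 0 1 ∧
        Pex.image (Pex.iterResAux res pre rest) = cnt u ∧
        (pre ++ u).count true = (pre ++ u).count false + 1) := by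
  intro rest
  induction rest with
  | nil =>
    intro pre hpre
    exact ⟨by simp [PA.iterResAux, PA.word], fun h => absurd (by simpa using h) hpre⟩
  | cons a rest ih =>
    intro pre hpre
    have hle := count_le_of_not_mem_N hpre
    by_cases hj : a = true ∧ pre.count true = pre.count false
    · -- jump
      have hres : res pre a = (0, (true, e1), 1) := by
        simp only [res]; rw [if_neg hpre, if_pos hj]
      obtain ⟨ha, hcc⟩ := hj
      subst ha
      have hN : pre ++ [true] ∈ N := by
        refine ⟨pre ++ [true], List.prefix_refl _, ?_⟩
        simp [List.count_append]
        omega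
      obtain ⟨hB1, hB2, hB3⟩ := resB rest (pre ++ [true]) hN
      simp only [PA.iterResAux, hres]
      refine ⟨by rw [word_cons, hB3], fun _ => ⟨[true], ⟨rest, rfl⟩, ⟨rfl, ?_, hB1⟩, ?_, ?_⟩⟩
      · show (0, (true, e1), 1) ∈ transList
        simp [transList]
      · rw [image_cons, hB2, cnt_single_true]; simp
      · simp [List.count_append]
        omega
    · -- no jump
      have hres : res pre a = (0, (a, if a then e1 else e0), 0) := by
        simp only [res]; rw [if_neg hpre, if_neg hj]
      have hpre' : pre ++ [a] ∉ N := by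
        rintro ⟨u, hu, hc⟩
        rcases prefix_append_cases hu with h1 | ⟨v, hv, rfl⟩
        · exact hpre ⟨u, h1, hc⟩
        · have hv' : v = [] ∨ v = [a] := by
            obtain ⟨w, hw⟩ := hv
            cases v with
            | nil => exact Or.inl rfl
            | cons b bs =>
              simp only [List.cons_append, List.cons.injEq] at hw
              obtain ⟨rfl, hw2⟩ := hw
              obtain ⟨rfl, -⟩ := List.append_eq_nil_iff.mp hw2
              exact Or.inr rfl
          rcases hv' with rfl | rfl
          · rw [List.append_nil] at hc
            exact hpre ⟨pre, List.prefix_refl _, hc⟩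
          · cases a with
            | false =>
              simp [List.count_append] at hc
              omega
            | true =>
              simp [List.count_append] at hc
              exact hj ⟨rfl, by omega⟩
      obtain ⟨ihw, ihm⟩ := ih (pre ++ [a]) hpre'
      simp only [PA.iterResAux, hres]
      refine ⟨by rw [word_cons, ihw], ?_⟩
      intro hNN
      have hNN' : (pre ++ [a]) ++ rest ∈ N := by simpa using hNN
      obtain ⟨u, hu, hrun, him, hcnt⟩ := ihm hNN'
      refine ⟨a :: u, ?_, ⟨rfl, ?_, hrun⟩, ?_, ?_⟩
      · obtain ⟨w, hw⟩ := hu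
        exact ⟨w, by rw [List.cons_append, hw]⟩
      · show (0, (a, if a then e1 else e0), 0) ∈ transList
        cases a <;> simp [transList]
      · rw [image_cons, him]
        cases a with
        | false => show e0 + cnt u = cnt (false :: u); rw [cnt_cons_false]
        | true => show e1 + cnt u = cnt (true :: u); rw [cnt_cons_true]
      · have heq : pre ++ a :: u = (pre ++ [a]) ++ u := by simp
        rw [heq]
        exact hcnt

lemma resolver_correct : ∀ w ∈ N,
    Pex.Accepting (Pex.iterResAux res [] w) ∧ Pex.word (Pex.iterResAux res [] w) = w := by
  intro w hw
  obtain ⟨hword, himp⟩ := resA w [] nil_not_mem_N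
  obtain ⟨u, hu, hrun, him, hcnt⟩ := himp (by simpa using hw)
  obtain ⟨hisrun, hlast⟩ := isRun_of_runFrom (P := Pex) hrun
  refine ⟨⟨hisrun, ?_, ?_⟩, hword⟩
  · rw [hlast]; exact rfl
  · rw [him]
    show (cnt u) 1 = (cnt u) 0 + 1
    simp only [cnt, Matrix.cons_val_one, Matrix.head_cons, Matrix.cons_val_zero]
    simpa using hcnt

lemma lang_eq : Pex.Lang = N := by
  apply subset_antisymm lang_sub
  intro w hw
  obtain ⟨hacc, hword⟩ := resolver_correct w hw
  exact ⟨_, hacc, hword⟩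

lemma Pex_HD : Pex.HistoryDeterministic :=
  ⟨res, fun w hw => resolver_correct w (lang_eq ▸ hw)⟩

end HDPAwork

/-- History-deterministic Parikh automata are not closed under complement: there is a
language accepted by an HDPA whose complement is not accepted by any Parikh automaton. -/
theorem hdpa_not_closed_complement :
    ∃ (d : ℕ) (P : PA Bool d), P.HistoryDeterministic ∧
      ∀ (d' : ℕ) (P' : PA Bool d'), P'.Lang ≠ (P.Lang)ᶜ := by
  refine ⟨2, HDPAwork.Pex, HDPAwork.Pex_HD, ?_⟩
  intro d' P' h
  rw [HDPAwork.lang_eq] at h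
  exact HDPAwork.Ncompl_not_PA d' P' h
end
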